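/- arXiv:2507.00415 — 7 statements merged into one kernel-verified Lean document; each statement's English description precedes it below -/
import Mathlib

section
/- Let G = (V,E) be a finite simple undirected graph on n vertices, where n is odd, and let γ = ⌈n/2⌉. If G is γ-robust, then the number of edges satisfies |E| ≥ 3γ(γ-1)/2. -/
open Finset

variable {V : Type*}

/-- A finset `S` is `r`-reachable in `G` if some vertex of `S` has at least `r`
neighbors outside `S`. -/
def RReachable [Fintype V] [DecidableEq V] (G : SimpleGraph V) [DecidableRel G.Adj]
    (r : ℕ) (S : Finset V) : Prop :=
  ∃ i ∈ S, r ≤ (G.neighborFinset i \ S).card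

/-- `G` is `r`-robust (for an integer `r ≥ 1`) if for every pair of nonempty disjoint
subsets `S1, S2` of the vertex set, at least one of them is `r`-reachable. -/
def RRobust [Fintype V] [DecidableEq V] (G : SimpleGraph V) [DecidableRel G.Adj]
    (r : ℕ) : Prop :=
  1 ≤ r ∧ ∀ S1 S2 : Finset V, S1.Nonempty → S2.Nonempty → Disjoint S1 S2 →
    RReachable G r S1 ∨ RReachable G r S2

/-!
Let `n = 2γ - 1`. For a nonempty `S` with `|S| < γ`, no vertex outside `S` has `γ` neighbours
in `S`, so robustness makes some `v ∈ S` have `γ` neighbours outside `S`. With `|S| = γ - 1`,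
these are all `γ` vertices outside `S`; choosing `S` disjoint from a clique `I` with `|I| < γ`,
`v` extends `I`, so `G` has a `γ`-clique `I`. Peeling the `γ - 1` vertices outside `I` one at a
time, each contributes `γ` new edges, giving `γ(γ - 1)` edges meeting `Iᶜ` on top of the
`γ(γ - 1)/2` edges inside `I`.
-/

namespace SimpleGraph

variable [Fintype V] [DecidableEq V] {G : SimpleGraph V} [DecidableRel G.Adj]

lemma card_edges_meeting_erase_add_le {R : Finset V} {w : V} (hw : w ∈ R) :
    #{e ∈ G.edgeFinset | ∃ v ∈ R.erase w, v ∈ e} + #(G.neighborFinset w \ R) ≤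
      #{e ∈ G.edgeFinset | ∃ v ∈ R, v ∈ e} := by
  rw [← card_image_of_injective (G.neighborFinset w \ R) fun _ _ ↦ Sym2.congr_right.mp,
    ← card_union_of_disjoint]
  · refine card_le_card (union_subset ?_ ?_)
    · exact monotone_filter_right _ fun _ _ ⟨v, hv, hve⟩ ↦ ⟨v, mem_of_mem_erase hv, hve⟩
    · rintro _ he
      obtain ⟨u, hu, rfl⟩ := mem_image.mp he
      have hwu : G.Adj w u := (mem_neighborFinset ..).mp (mem_sdiff.mp hu).1
      exact mem_filter.mpr ⟨G.mem_edgeFinset.mpr hwu, w, hw, Sym2.mem_mk_left w u⟩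
  · simp only [Finset.disjoint_left, mem_image, mem_sdiff, mem_filter, not_exists, not_and,
      forall_exists_index, and_imp]
    rintro _ - v hv hve u - huR rfl
    rcases Sym2.mem_iff.mp hve with rfl | rfl
    · exact (ne_of_mem_erase hv) rfl
    · exact huR (mem_of_mem_erase hv)

lemma IsNClique.choose_two_le_card_edges_subset {k : ℕ} {I : Finset V} (h : G.IsNClique k I) :
    k.choose 2 ≤ #{e ∈ G.edgeFinset | ∀ v ∈ e, v ∈ I} := by
  rw [← h.card_eq, ← Sym2.card_image_offDiag]
  refine card_le_card fun e he ↦ ?_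
  obtain ⟨⟨a, b⟩, hab, rfl⟩ := mem_image.mp he
  obtain ⟨ha, hb, hne⟩ := mem_offDiag.mp hab
  refine mem_filter.mpr ⟨G.mem_edgeFinset.mpr (h.isClique ha hb hne), fun v hv ↦ ?_⟩
  rcases Sym2.mem_iff.mp hv with rfl | rfl <;> assumption

end SimpleGraph

open SimpleGraph

section

variable [Fintype V] [DecidableEq V] {G : SimpleGraph V} [DecidableRel G.Adj] {r : ℕ}

lemma not_rReachable_of_card_compl_lt {S : Finset V} (hS : #Sᶜ < r) :
    ¬RReachable G r S := by
  rintro ⟨v, -, hv⟩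
  have := card_le_card fun u (hu : u ∈ G.neighborFinset v \ S) ↦ mem_compl.2 (mem_sdiff.1 hu).2
  omega

namespace RRobust

lemma rReachable_of_card_lt (hrob : RRobust G r) {S : Finset V} (hS : S.Nonempty)
    (hSr : #S < r) (hSV : #S < Fintype.card V) : RReachable G r S := by
  have hSc : Sᶜ.Nonempty := by rw [← card_pos, card_compl]; omega
  refine (hrob.2 S Sᶜ hS hSc disjoint_compl_right).resolve_right ?_
  exact not_rReachable_of_card_compl_lt (by rwa [compl_compl])

lemma mul_card_le_card_edges_meeting (hrob : RRobust G r) (hrV : r ≤ Fintype.card V)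
    (R : Finset V) (hR : #R < r) : r * #R ≤ #{e ∈ G.edgeFinset | ∃ v ∈ R, v ∈ e} := by
  induction R using Finset.strongInduction with
  | H R ih =>
    obtain rfl | hne := R.eq_empty_or_nonempty
    · simp
    obtain ⟨w, hw, hwr⟩ := hrob.rReachable_of_card_lt hne hR (by omega)
    have hrest := ih (R.erase w) (erase_ssubset hw) (by rw [card_erase_of_mem hw]; omega)
    have hstep := card_edges_meeting_erase_add_le (G := G) hw
    rw [card_erase_of_mem hw] at hrest
    have : r * #R = r * (#R - 1) + r := by
      rw [← Nat.mul_add_one, Nat.sub_add_cancel hne.card_pos]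
    omega

lemma exists_adj_forall_of_card_lt {γ : ℕ} (hrob : RRobust G γ)
    (hcard : Fintype.card V + 1 = 2 * γ) (hγ : 2 ≤ γ) {I : Finset V} (hI : #I < γ) :
    ∃ v, ∀ u ∈ I, G.Adj v u := by
  obtain ⟨S, hSI, hS⟩ := exists_subset_card_eq (s := Iᶜ) (n := γ - 1)
    (by rw [card_compl]; omega)
  obtain ⟨v, -, hv⟩ := hrob.rReachable_of_card_lt (S := S) (card_pos.mp (by omega))
    (by omega) (by omega)
  have hnbr : G.neighborFinset v \ S = Sᶜ :=
    eq_of_subset_of_card_le (fun u hu ↦ mem_compl.2 (mem_sdiff.1 hu).2)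
      (by rw [card_compl]; omega)
  refine ⟨v, fun u hu ↦ ?_⟩
  have huS : u ∈ G.neighborFinset v \ S :=
    hnbr ▸ mem_compl.2 fun huS ↦ mem_compl.1 (hSI huS) hu
  exact (G.mem_neighborFinset ..).1 (mem_sdiff.1 huS).1

lemma exists_isNClique {γ : ℕ} (hrob : RRobust G γ) (hcard : Fintype.card V + 1 = 2 * γ)
    (hγ : 2 ≤ γ) : ∃ I : Finset V, G.IsNClique γ I := by
  suffices ∀ k ≤ γ, ∃ I : Finset V, G.IsNClique k I from this γ le_rfl
  intro k hk
  induction k with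
  | zero => exact ⟨∅, isNClique_zero.mpr rfl⟩
  | succ k ih =>
    obtain ⟨I, hI⟩ := ih (by omega)
    obtain ⟨v, hv⟩ :=
      hrob.exists_adj_forall_of_card_lt hcard hγ (I := I) (by rw [hI.card_eq]; omega)
    exact ⟨insert v I, hI.insert hv⟩

end RRobust

end

/-- If `G` is a graph on an odd number `n` of vertices and `γ = ⌈n/2⌉`, and `G` is
`γ`-robust, then `|E| ≥ 3γ(γ-1)/2`. -/
theorem stmt1 [Fintype V] [DecidableEq V] (G : SimpleGraph V) [DecidableRel G.Adj]
    (n γ : ℕ) (hn : Fintype.card V = n) (hodd : Odd n) (hγ : γ = (n + 1) / 2)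
    (hrob : RRobust G γ) :
    3 * γ * (γ - 1) / 2 ≤ G.edgeFinset.card := by
  obtain ⟨k, rfl⟩ := hodd
  have hcard : Fintype.card V + 1 = 2 * γ := by omega
  rcases lt_or_ge γ 2 with hγ2 | hγ2
  · simp [Nat.sub_eq_zero_of_le (Nat.le_of_lt_succ hγ2)]
  obtain ⟨I, hI⟩ := hrob.exists_isNClique hcard hγ2
  have hcompl : #Iᶜ = γ - 1 := by rw [card_compl, hI.card_eq]; omega
  have hinside := hI.choose_two_le_card_edges_subset
  have hmeeting := hrob.mul_card_le_card_edges_meeting (by omega) Iᶜ (by omega)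
  have hsplit :
      #{e ∈ G.edgeFinset | ∀ v ∈ e, v ∈ I} + #{e ∈ G.edgeFinset | ∃ v ∈ Iᶜ, v ∈ e} =
        #G.edgeFinset := by
    rw [add_comm,
      ← card_filter_add_card_filter_not (s := G.edgeFinset) fun e ↦ ∃ v ∈ Iᶜ, v ∈ e]
    simp only [mem_compl, not_exists, not_and, not_imp_not]
  rw [hcompl] at hmeeting
  calc 3 * γ * (γ - 1) / 2 = γ.choose 2 + γ * (γ - 1) := by
        rw [Nat.choose_two_right, Nat.mul_assoc]; omega
    _ ≤ _ := add_le_add hinside hmeeting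
    _ = #G.edgeFinset := hsplit
end

section
/- Let G = (V,E) be a finite simple undirected graph on n vertices, where n is even, and let γ = n/2. If G is γ-robust, then there exists a subset V_S ⊆ V with |V_S| = γ+1 such that the induced subgraph of G on V_S has at least ⌊(γ²+2)/2⌋ edges. -/
/-!
Count non-adjacent pairs instead of edges: a `(γ + 1)`-set with `E` edges has `γ (γ + 1) - 2E` as
the degree sum of its non-adjacency graph, so it suffices to find one with fewer than `γ / 2`
non-adjacent pairs. Take `T` with fewest of them. As `Tᶜ` has only `γ - 1` vertices, robustness
makes `Tᶜ` reachable: some outside vertex has at most one non-neighbour in `T`. Exchanging it with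
a vertex of `T` shows that every vertex of `T` has at most one non-neighbour in `T` and one has
none, so at most `γ / 2` pairs are missing. In the extremal case the missing pairs form a perfect
matching of `T` minus an apex `u`; a second exchange moves the apex to a vertex with a single
non-neighbour in the whole graph. Averaging over the transversals of the matching then produces a
balanced cut across which every vertex has a non-neighbour, which robustness forbids.
-/

open Finset

variable {V : Type*}

lemma Finset.sum_add_card_filter_eq_zero_of_le_one {α : Type*} {s : Finset α} {f : α → ℕ}
    (h : ∀ a ∈ s, f a ≤ 1) : ∑ a ∈ s, f a + #{a ∈ s | f a = 0} = #s := by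
  rw [card_filter, ← sum_add_distrib, card_eq_sum_ones]
  exact sum_congr rfl fun a ha => by have := h a ha; split <;> omega

namespace SimpleGraph

variable [Fintype V] [DecidableEq V] (G : SimpleGraph V) [DecidableRel G.Adj]

def nonAdjCard (v : V) (S : Finset V) : ℕ := #(Gᶜ.neighborFinset v ∩ S)

def nonAdjDegSum (T : Finset V) : ℕ := ∑ t ∈ T, G.nonAdjCard t T

variable {G} {γ : ℕ} {a d t u v w : V} {S S' T : Finset V}

lemma nonAdjCard_mono (h : S ⊆ S') : G.nonAdjCard v S ≤ G.nonAdjCard v S' :=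
  card_le_card (inter_subset_inter_left h)

lemma nonAdjCard_pos : 0 < G.nonAdjCard v S ↔ ∃ w ∈ S, Gᶜ.Adj v w := by
  simp only [nonAdjCard, card_pos, Finset.Nonempty, mem_inter, mem_neighborFinset, and_comm]

lemma nonAdjCard_eq_zero : G.nonAdjCard v S = 0 ↔ ∀ w ∈ S, ¬Gᶜ.Adj v w := by
  simp only [nonAdjCard, card_eq_zero, eq_empty_iff_forall_notMem, mem_inter,
    mem_neighborFinset, not_and']

lemma nonAdjCard_erase_of_not_adj (h : ¬Gᶜ.Adj v w) :
    G.nonAdjCard v (S.erase w) = G.nonAdjCard v S := by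
  rw [nonAdjCard, inter_erase, erase_eq_of_notMem fun hw => h (by simpa using (mem_inter.1 hw).1),
    nonAdjCard]

lemma nonAdjCard_erase_self : G.nonAdjCard v (S.erase v) = G.nonAdjCard v S :=
  nonAdjCard_erase_of_not_adj (Gᶜ.loopless.irrefl v)

lemma nonAdjCard_erase_add_one (hw : w ∈ S) (h : Gᶜ.Adj v w) :
    G.nonAdjCard v (S.erase w) + 1 = G.nonAdjCard v S := by
  rw [nonAdjCard, inter_erase, card_erase_add_one (mem_inter.2 ⟨by simpa using h, hw⟩),
    nonAdjCard]

lemma nonAdjCard_le_erase_add_one : G.nonAdjCard v S ≤ G.nonAdjCard v (S.erase w) + 1 := by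
  rw [nonAdjCard, nonAdjCard, inter_erase]
  have := pred_card_le_card_erase (s := Gᶜ.neighborFinset v ∩ S) (a := w)
  omega

lemma nonAdjCard_add_nonAdjCard_compl : G.nonAdjCard v S + G.nonAdjCard v Sᶜ = Gᶜ.degree v := by
  rw [nonAdjCard, nonAdjCard, ← sdiff_eq_inter_compl, card_inter_add_card_sdiff,
    card_neighborFinset_eq_degree]

lemma card_neighborFinset_inter_add_nonAdjCard :
    #(G.neighborFinset v ∩ S) + G.nonAdjCard v S = #(S.erase v) := by
  rw [nonAdjCard, ← card_union_of_disjoint]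
  · congr 1
    ext w
    by_cases hw : w = v <;> simp [hw]
    tauto
  · rw [Finset.disjoint_left]
    intro w h h'
    simp only [mem_inter, mem_neighborFinset, compl_adj] at h h'
    exact h'.1.2 h.1

lemma nonAdjCard_insert (ha : a ∉ S) :
    G.nonAdjCard v (insert a S) = G.nonAdjCard v S + if Gᶜ.Adj v a then 1 else 0 := by
  unfold nonAdjCard
  by_cases h : Gᶜ.Adj v a
  · rw [inter_insert_of_mem (by simpa using h), card_insert_of_notMem (by simp [ha]), if_pos h]
  · rw [inter_insert_of_notMem (by simpa using h), if_neg h, add_zero]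

lemma nonAdjDegSum_insert (ha : a ∉ S) :
    G.nonAdjDegSum (insert a S) = G.nonAdjDegSum S + 2 * G.nonAdjCard a S := by
  have hsymm : ∑ t ∈ S, (if Gᶜ.Adj t a then 1 else 0) = G.nonAdjCard a S := by
    rw [← card_filter, nonAdjCard, filter_congr fun t _ => Gᶜ.adj_comm t a, inter_comm,
      ← filter_mem_eq_inter]
    simp
  rw [nonAdjDegSum, sum_insert ha, ← nonAdjCard_erase_self, erase_insert ha,
    sum_congr rfl fun t _ => nonAdjCard_insert ha, sum_add_distrib, hsymm, nonAdjDegSum]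
  ring

variable (G) in
lemma two_mul_ncard_edges_add_nonAdjDegSum (T : Finset V) :
    2 * {e : Sym2 V | e ∈ G.edgeSet ∧ ∀ v ∈ e, v ∈ T}.ncard + G.nonAdjDegSum T
      = #T * (#T - 1) := by
  have hedges : {e : Sym2 V | e ∈ G.edgeSet ∧ ∀ v ∈ e, v ∈ T} = ↑(G.edgeFinset ∩ T.sym2) := by
    ext e
    simp only [Set.mem_ofPred_eq, coe_inter, Set.mem_inter_iff, mem_coe, mem_edgeFinset,
      Finset.mem_sym2_iff]
  have hdeg : 2 * #(G.edgeFinset ∩ T.sym2) = ∑ t ∈ T, #(G.neighborFinset t ∩ T) := by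
    have hedge := congrArg card (map_edgeFinset_induce (G := G) (s := (T : Set V)))
    have hnbr := fun v => congrArg card (map_neighborFinset_induce (G := G) (s := (T : Set V)) v)
    simp only [card_map, toFinset_coe] at hedge hnbr
    rw [← hedge, ← sum_degrees_eq_twice_card_edges]
    simp only [← card_neighborFinset_eq_degree, hnbr]
    exact (sum_subtype T (fun _ => Iff.rfl) fun t => #(G.neighborFinset t ∩ T)).symm
  rw [hedges, Set.ncard_coe_finset, hdeg, nonAdjDegSum, ← sum_add_distrib,
    sum_congr rfl fun t _ => card_neighborFinset_inter_add_nonAdjCard,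
    sum_congr rfl fun t ht => card_erase_of_mem ht, sum_const, smul_eq_mul]

lemma nonAdjDegSum_erase_add (ht : t ∈ T) :
    G.nonAdjDegSum (T.erase t) + 2 * G.nonAdjCard t T = G.nonAdjDegSum T := by
  conv_rhs => rw [← insert_erase ht]
  rw [nonAdjDegSum_insert (notMem_erase t T), nonAdjCard_erase_self]

variable (G) in
/-- Fewest non-adjacent pairs among sets of the same size, i.e. most edges. -/
def IsDensest (T : Finset V) : Prop :=
  ∀ T' : Finset V, #T' = #T → G.nonAdjDegSum T ≤ G.nonAdjDegSum T'

variable (G) in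
lemma exists_isDensest {k : ℕ} (hk : k ≤ Fintype.card V) :
    ∃ T : Finset V, #T = k ∧ G.IsDensest T := by
  obtain ⟨T, hT, hmin⟩ := (powersetCard k (univ : Finset V)).exists_min_image G.nonAdjDegSum
    (powersetCard_nonempty.2 (by simpa using hk))
  rw [mem_powersetCard_univ] at hT
  exact ⟨T, hT, fun T' hT' => hmin T' (mem_powersetCard_univ.2 (hT'.trans hT))⟩

lemma IsDensest.nonAdjCard_le (hT : G.IsDensest T) (ht : t ∈ T) (hd : d ∉ T) :
    G.nonAdjCard t T ≤ G.nonAdjCard d (T.erase t) := by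
  have hd' : d ∉ T.erase t := fun h => hd (mem_of_mem_erase h)
  have hle := hT (insert d (T.erase t)) (by rw [card_insert_of_notMem hd', card_erase_add_one ht])
  rw [nonAdjDegSum_insert hd', ← nonAdjDegSum_erase_add ht] at hle
  omega

lemma IsDensest.nonAdjCard_le_one (hT : G.IsDensest T) (hd : d ∉ T) (hd1 : G.nonAdjCard d T ≤ 1)
    (ht : t ∈ T) : G.nonAdjCard t T ≤ 1 :=
  (hT.nonAdjCard_le ht hd).trans ((nonAdjCard_mono (erase_subset t T)).trans hd1)

lemma IsDensest.nonAdjCard_eq_zero_of_adj (hT : G.IsDensest T) (hd : d ∉ T)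
    (hd1 : G.nonAdjCard d T ≤ 1) (hw : w ∈ T) (hdw : Gᶜ.Adj d w) : G.nonAdjCard w T = 0 := by
  have := hT.nonAdjCard_le hw hd
  have := nonAdjCard_erase_add_one hw hdw
  omega

lemma IsDensest.exists_nonAdjCard_eq_zero (hT : G.IsDensest T) (hd : d ∉ T)
    (hd1 : G.nonAdjCard d T ≤ 1) (hne : T.Nonempty) : ∃ w ∈ T, G.nonAdjCard w T = 0 := by
  by_cases h0 : G.nonAdjCard d T = 0
  · obtain ⟨t, ht⟩ := hne
    exact ⟨t, ht, Nat.le_zero.1 <| (hT.nonAdjCard_le ht hd).trans <|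
      (nonAdjCard_mono (erase_subset t T)).trans h0.le⟩
  · obtain ⟨w, hw, hdw⟩ := nonAdjCard_pos.1 (Nat.pos_of_ne_zero h0)
    exact ⟨w, hw, hT.nonAdjCard_eq_zero_of_adj hd hd1 hw hdw⟩

lemma IsDensest.nonAdjDegSum_lt (hT : G.IsDensest T) (hd : d ∉ T) (hd1 : G.nonAdjCard d T ≤ 1)
    (hne : T.Nonempty) : G.nonAdjDegSum T < #T := by
  obtain ⟨w, hw, hw0⟩ := hT.exists_nonAdjCard_eq_zero hd hd1 hne
  have hsum := sum_add_card_filter_eq_zero_of_le_one fun t ht => hT.nonAdjCard_le_one hd hd1 ht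
  have hpos : 0 < #{t ∈ T | G.nonAdjCard t T = 0} := card_pos.2 ⟨w, mem_filter.2 ⟨hw, hw0⟩⟩
  rw [nonAdjDegSum]
  omega

lemma IsDensest.of_card_eq {T' : Finset V} (hT : G.IsDensest T) (hcard : #T' = #T)
    (hsum : G.nonAdjDegSum T' = G.nonAdjDegSum T) : G.IsDensest T' :=
  fun T'' h'' => hsum ▸ hT T'' (h''.trans hcard)

variable (G) in
/-- The extremal case of `IsDensest.nonAdjDegSum_lt`: the non-adjacent pairs of `T` form a perfect
matching of `T.erase u`. -/
structure IsTight (γ : ℕ) (T : Finset V) (u : V) : Prop where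
  isDensest : G.IsDensest T
  card_eq : #T = γ + 1
  apex_mem : u ∈ T
  nonAdjCard_apex : G.nonAdjCard u T = 0
  nonAdjCard_of_ne : ∀ t ∈ T, t ≠ u → G.nonAdjCard t T = 1

lemma IsDensest.exists_isTight (hT : G.IsDensest T) (hcard : #T = γ + 1) (hd : d ∉ T)
    (hd1 : G.nonAdjCard d T ≤ 1) (hsum : G.nonAdjDegSum T = γ) : ∃ u, G.IsTight γ T u := by
  have hle : ∀ t ∈ T, G.nonAdjCard t T ≤ 1 := fun t ht => hT.nonAdjCard_le_one hd hd1 ht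
  have hzero : #{t ∈ T | G.nonAdjCard t T = 0} = 1 := by
    have := sum_add_card_filter_eq_zero_of_le_one hle
    rw [← nonAdjDegSum, hsum, hcard] at this
    omega
  obtain ⟨u, hu⟩ := card_eq_one.1 hzero
  have hmem : ∀ t, t ∈ T ∧ G.nonAdjCard t T = 0 ↔ t = u := fun t => by
    simpa only [mem_filter, mem_singleton] using Finset.ext_iff.1 hu t
  obtain ⟨huT, hu0⟩ := (hmem u).2 rfl
  refine ⟨u, hT, hcard, huT, hu0, fun t ht htu => ?_⟩
  have h0 : G.nonAdjCard t T ≠ 0 := fun h0 => htu ((hmem t).1 ⟨ht, h0⟩)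
  have := hle t ht
  omega

lemma IsTight.eq_of_nonAdjCard_eq_zero (h : G.IsTight γ T u) (hw : w ∈ T)
    (hw0 : G.nonAdjCard w T = 0) : w = u := by
  by_contra hwu
  have := h.nonAdjCard_of_ne w hw hwu
  omega

lemma IsTight.eq_of_adj (h : G.IsTight γ T u) (hd : d ∉ T)
    (hd1 : G.nonAdjCard d T ≤ 1) (hw : w ∈ T) (hdw : Gᶜ.Adj d w) : w = u :=
  h.eq_of_nonAdjCard_eq_zero hw (h.isDensest.nonAdjCard_eq_zero_of_adj hd hd1 hw hdw)

lemma IsTight.one_le_nonAdjCard (h : G.IsTight γ T u) (hγ : 1 ≤ γ) (hd : d ∉ T) :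
    1 ≤ G.nonAdjCard d T := by
  obtain ⟨t, ht, htu⟩ := exists_mem_ne (by rw [h.card_eq]; omega) u
  rw [← h.nonAdjCard_of_ne t ht htu]
  exact (h.isDensest.nonAdjCard_le ht hd).trans (nonAdjCard_mono (erase_subset t T))

lemma IsTight.nonAdjDegSum_eq (h : G.IsTight γ T u) : G.nonAdjDegSum T = γ := by
  rw [nonAdjDegSum, ← add_sum_erase T _ h.apex_mem, h.nonAdjCard_apex, zero_add,
    sum_congr rfl fun t ht => h.nonAdjCard_of_ne t (mem_of_mem_erase ht) (ne_of_mem_erase ht),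
    sum_const, smul_eq_mul, mul_one, card_erase_of_mem h.apex_mem, h.card_eq, add_tsub_cancel_right]

lemma IsTight.not_adj (h : G.IsTight γ T u) (ht : t ∈ T) : ¬Gᶜ.Adj u t :=
  nonAdjCard_eq_zero.1 h.nonAdjCard_apex t ht

lemma IsTight.exists_adj_ne (h : G.IsTight γ T u) (hγ : 1 ≤ γ) (hd : d ∉ T)
    (hvu : v ≠ u) : ∃ w ∈ T, w ≠ v ∧ Gᶜ.Adj d w := by
  by_cases hd1 : G.nonAdjCard d T ≤ 1
  · obtain ⟨w, hw, hdw⟩ := nonAdjCard_pos.1 (h.one_le_nonAdjCard hγ hd)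
    obtain rfl := h.eq_of_adj hd hd1 hw hdw
    exact ⟨w, hw, hvu.symm, hdw⟩
  · have := nonAdjCard_le_erase_add_one (G := G) (v := d) (S := T) (w := v)
    obtain ⟨w, hw, hdw⟩ := nonAdjCard_pos.1 (by omega : 0 < G.nonAdjCard d (T.erase v))
    exact ⟨w, mem_of_mem_erase hw, ne_of_mem_erase hw, hdw⟩

lemma IsTight.exists_involution (h : G.IsTight γ T u) :
    ∃ f : V → V, (∀ t ∈ T.erase u, f t ∈ T.erase u) ∧ (∀ t ∈ T.erase u, f (f t) = t) ∧
      ∀ t ∈ T.erase u, Gᶜ.Adj t (f t) := by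
  have hone : ∀ t ∈ T.erase u, ∃ w, Gᶜ.neighborFinset t ∩ T = {w} := fun t ht =>
    card_eq_one.1 (h.nonAdjCard_of_ne t (mem_of_mem_erase ht) (ne_of_mem_erase ht))
  choose! f hf using hone
  have hmate : ∀ t ∈ T.erase u, ∀ w, w ∈ T ∧ Gᶜ.Adj t w ↔ w = f t := fun t ht w => by
    simpa only [mem_inter, mem_neighborFinset, mem_singleton, and_comm] using
      Finset.ext_iff.1 (hf t ht) w
  have hfT : ∀ t ∈ T.erase u, f t ∈ T ∧ Gᶜ.Adj t (f t) := fun t ht => (hmate t ht _).2 rfl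
  have hfM : ∀ t ∈ T.erase u, f t ∈ T.erase u := fun t ht =>
    mem_erase.2 ⟨fun hfu => h.not_adj (mem_of_mem_erase ht) (hfu ▸ (hfT t ht).2).symm,
      (hfT t ht).1⟩
  refine ⟨f, hfM, fun t ht => ?_, fun t ht => (hfT t ht).2⟩
  exact ((hmate (f t) (hfM t ht) t).1 ⟨mem_of_mem_erase ht, (hfT t ht).2.symm⟩).symm

end SimpleGraph

open SimpleGraph

section Robust

variable [Fintype V] [DecidableEq V] {G : SimpleGraph V} [DecidableRel G.Adj] {r γ : ℕ}
  {S T : Finset V}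

lemma RReachable.exists_add_nonAdjCard_compl_le (h : RReachable G r S) :
    ∃ i ∈ S, r + G.nonAdjCard i Sᶜ ≤ #Sᶜ := by
  obtain ⟨i, hi, hr⟩ := h
  have hcount := G.card_neighborFinset_inter_add_nonAdjCard (v := i) (S := Sᶜ)
  rw [erase_eq_of_notMem (by simpa using hi), ← sdiff_eq_inter_compl] at hcount
  exact ⟨i, hi, by omega⟩

lemma RReachable.exists_forall_compl_adj_mem (h : RReachable G r S) (hS : #Sᶜ ≤ r) :
    ∃ i ∈ S, ∀ j, Gᶜ.Adj i j → j ∈ S := by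
  obtain ⟨i, hi, hle⟩ := h.exists_add_nonAdjCard_compl_le
  have hzero := nonAdjCard_eq_zero.1 (by omega : G.nonAdjCard i Sᶜ = 0)
  exact ⟨i, hi, fun j hij => by simpa using mt (hzero j) (not_not.2 hij)⟩

lemma RRobust.rReachable_or_rReachable_compl (h : RRobust G r) (hS : S.Nonempty)
    (hSc : Sᶜ.Nonempty) : RReachable G r S ∨ RReachable G r Sᶜ :=
  h.2 S Sᶜ hS hSc disjoint_compl_right

lemma RRobust.exists_forall_compl_adj_mem_iff (hrob : RRobust G γ)
    (hV : Fintype.card V = 2 * γ) (hS : #S = γ) :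
    ∃ i, ∀ j, Gᶜ.Adj i j → (i ∈ S ↔ j ∈ S) := by
  have hSc : #Sᶜ = γ := by rw [card_compl, hV, hS]; omega
  have hγ := hrob.1
  rcases hrob.rReachable_or_rReachable_compl (card_pos.1 (by omega : 0 < #S))
    (card_pos.1 (by omega : 0 < #Sᶜ)) with h | h
  · obtain ⟨i, hi, hside⟩ := h.exists_forall_compl_adj_mem hSc.le
    exact ⟨i, fun j hij => iff_of_true hi (hside j hij)⟩
  · obtain ⟨i, hi, hside⟩ := h.exists_forall_compl_adj_mem (by rw [compl_compl, hS])
    exact ⟨i, fun j hij => iff_of_false (mem_compl.1 hi) (mem_compl.1 (hside j hij))⟩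

lemma RRobust.exists_notMem_nonAdjCard_le_one (hrob : RRobust G γ)
    (hV : Fintype.card V = 2 * γ) (hγ : 2 ≤ γ) (hT : #T = γ + 1) :
    ∃ d ∉ T, G.nonAdjCard d T ≤ 1 := by
  have hTc : #Tᶜ = γ - 1 := by rw [card_compl, hV, hT]; omega
  rcases hrob.rReachable_or_rReachable_compl (card_pos.1 (by omega : 0 < #T))
    (card_pos.1 (by omega : 0 < #Tᶜ)) with h | h
  · obtain ⟨i, -, hle⟩ := h.exists_add_nonAdjCard_compl_le
    omega
  · obtain ⟨d, hd, hle⟩ := h.exists_add_nonAdjCard_compl_le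
    rw [compl_compl, hT] at hle
    exact ⟨d, mem_compl.1 hd, by omega⟩

lemma RRobust.eq_top_of_card_eq_two (hrob : RRobust G 1) (hV : Fintype.card V = 2) : G = ⊤ := by
  ext x y
  refine ⟨G.ne_of_adj, fun hxy => not_not.1 fun hnadj => ?_⟩
  have hcompl : Gᶜ.Adj x y := (compl_adj G x y).2 ⟨hxy, hnadj⟩
  have huniv : ({x, y} : Finset V) = univ := eq_univ_of_card _ (by rw [card_pair hxy, hV])
  obtain ⟨i, hi⟩ := hrob.exists_forall_compl_adj_mem_iff (S := {x}) (by rw [hV]) (card_singleton x)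
  rcases mem_insert.1 (huniv ▸ mem_univ i : i ∈ ({x, y} : Finset V)) with hix | hiy
  · rw [hix] at hi
    exact hxy (mem_singleton.1 ((hi y hcompl).1 (mem_singleton_self x))).symm
  · rw [mem_singleton.1 hiy] at hi
    exact hxy (mem_singleton.1 ((hi x hcompl.symm).2 (mem_singleton_self x))).symm

end Robust

open scoped symmDiff

lemma Finset.exists_mul_card_filter_le {β δ : Type*} {𝒮 : Finset β} {D : Finset δ}
    (R : β → δ → Prop) [∀ S d, Decidable (R S d)] (c : ℕ) (h𝒮 : 𝒮.Nonempty)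
    (h : ∀ d ∈ D, c * #{S ∈ 𝒮 | R S d} ≤ #𝒮) : ∃ S ∈ 𝒮, c * #{d ∈ D | R S d} ≤ #D := by
  refine exists_le_of_sum_le h𝒮 ?_
  calc ∑ S ∈ 𝒮, c * #{d ∈ D | R S d} = ∑ d ∈ D, c * #{S ∈ 𝒮 | R S d} := by
        rw [← mul_sum, ← mul_sum]
        exact congrArg _ (sum_card_bipartiteAbove_eq_sum_card_bipartiteBelow (r := R))
    _ ≤ ∑ _d ∈ D, #𝒮 := sum_le_sum h
    _ = ∑ _S ∈ 𝒮, #D := by rw [sum_const, sum_const, smul_eq_mul, smul_eq_mul, mul_comm]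

lemma Finset.two_mul_card_filter_mem_iff_mem_le {α : Type*} [DecidableEq α]
    {𝒮 : Finset (Finset α)} {P : Finset α} {x y : α} (h𝒮 : ∀ S ∈ 𝒮, S ∆ P ∈ 𝒮) (hx : x ∈ P)
    (hy : y ∉ P) : 2 * #{S ∈ 𝒮 | x ∈ S ↔ y ∈ S} ≤ #𝒮 := by
  have hflip : #{S ∈ 𝒮 | x ∈ S ↔ y ∈ S} ≤ #{S ∈ 𝒮 | ¬(x ∈ S ↔ y ∈ S)} := by
    refine card_le_card_of_injOn (· ∆ P) (fun S hS => ?_)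
      (fun S _ S' _ h => symmDiff_left_injective P h)
    rw [coe_filter, Set.mem_ofPred_eq] at hS
    rw [coe_filter, Set.mem_ofPred_eq, mem_symmDiff, mem_symmDiff]
    exact ⟨h𝒮 S hS.1, by tauto⟩
  have := card_filter_add_card_filter_not (s := 𝒮) (p := fun S => x ∈ S ↔ y ∈ S)
  omega

lemma Finset.exists_subsuperset_card_eq_of_disjoint {α : Type*} [DecidableEq α]
    {D P Q : Finset α} {k : ℕ} (hP : P ⊆ D) (hPQ : Disjoint P Q) (hPk : #P ≤ k)
    (hQk : #Q + k ≤ #D) : ∃ R ⊆ D, P ⊆ R ∧ Disjoint R Q ∧ #R = k := by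
  obtain ⟨R, hPR, hR, hRk⟩ := exists_subsuperset_card_eq (subset_sdiff.2 ⟨hP, hPQ⟩) hPk
    (by have := le_card_sdiff Q D; omega)
  exact ⟨R, hR.trans sdiff_subset, hPR, (subset_sdiff.1 hR).2, hRk⟩

section Transversal

variable {α : Type*} [DecidableEq α] {M S : Finset α} {f : α → α} {x y : α}

def transversals (M : Finset α) (f : α → α) : Finset (Finset α) :=
  {S ∈ M.powerset | ∀ x ∈ M, x ∈ S ↔ f x ∉ S}

lemma mem_transversals : S ∈ transversals M f ↔ S ⊆ M ∧ ∀ x ∈ M, x ∈ S ↔ f x ∉ S := by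
  rw [transversals, mem_filter, mem_powerset]

lemma two_mul_card_of_mem_transversals (hfM : ∀ x ∈ M, f x ∈ M) (hff : ∀ x ∈ M, f (f x) = x)
    (hS : S ∈ transversals M f) : 2 * #S = #M := by
  obtain ⟨hSM, hS⟩ := mem_transversals.1 hS
  have himage : S.image f = M \ S := by
    ext x
    simp only [mem_image, mem_sdiff]
    constructor
    · rintro ⟨y, hy, rfl⟩
      exact ⟨hfM y (hSM hy), (hS y (hSM hy)).1 hy⟩
    · rintro ⟨hx, hxS⟩
      refine ⟨f x, ?_, hff x hx⟩
      have := hS (f x) (hfM x hx)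
      rw [hff x hx] at this
      tauto
  have hinj : Set.InjOn f S := fun a ha b hb hab => by
    rw [← hff a (hSM ha), hab, hff b (hSM hb)]
  have hcard := card_image_of_injOn hinj
  rw [himage, card_sdiff_of_subset hSM] at hcard
  have := card_le_card hSM
  omega

lemma transversals_nonempty (hfM : ∀ x ∈ M, f x ∈ M) (hff : ∀ x ∈ M, f (f x) = x)
    (hfx : ∀ x ∈ M, f x ≠ x) : (transversals M f).Nonempty := by
  classical
  refine ⟨{x ∈ M | WellOrderingRel x (f x)}, mem_transversals.2 ⟨filter_subset _ _, fun x hx => ?_⟩⟩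
  simp only [mem_filter, hx, hfM x hx, hff x hx, true_and]
  exact ⟨asymm, fun h => (trichotomous_of WellOrderingRel x (f x)).resolve_right
    (not_or.2 ⟨(hfx x hx).symm, h⟩)⟩

lemma symmDiff_mem_transversals (hfM : ∀ x ∈ M, f x ∈ M) (hff : ∀ x ∈ M, f (f x) = x)
    (hS : S ∈ transversals M f) (hx : x ∈ M) : S ∆ {x, f x} ∈ transversals M f := by
  obtain ⟨hSM, hS⟩ := mem_transversals.1 hS
  have hP : ∀ t ∈ M, t ∈ ({x, f x} : Finset α) ↔ f t ∈ ({x, f x} : Finset α) := by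
    intro t ht
    simp only [mem_insert, mem_singleton]
    constructor
    · rintro (h | h) <;> simp [h, hff x hx]
    · rintro (h | h)
      · exact Or.inr (by rw [← h, hff t ht])
      · exact Or.inl (by rw [← hff t ht, h, hff x hx])
  refine mem_transversals.2 ⟨symmDiff_subset_union.trans (union_subset hSM ?_), fun t ht => ?_⟩
  · exact insert_subset hx (singleton_subset_iff.2 (hfM x hx))
  · have := hS t ht
    have := hP t ht
    rw [mem_symmDiff, mem_symmDiff]
    tauto

lemma two_mul_card_filter_mem_iff_mem_transversals_le (hfM : ∀ x ∈ M, f x ∈ M)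
    (hff : ∀ x ∈ M, f (f x) = x) (hx : x ∈ M) (hxy : x ≠ y) :
    2 * #{S ∈ transversals M f | x ∈ S ↔ y ∈ S} ≤ #(transversals M f) := by
  by_cases hyx : y = f x
  · rw [filter_false_of_mem fun S hS => by rw [hyx, (mem_transversals.1 hS).2 x hx]; tauto]
    simp
  · refine two_mul_card_filter_mem_iff_mem_le (P := {x, f x})
      (fun S hS => symmDiff_mem_transversals hfM hff hS hx) (mem_insert_self x _) ?_
    simp only [mem_insert, mem_singleton, not_or]
    exact ⟨hxy.symm, hyx⟩

/-- Each `N d` is split by at least half of all transversals; average over them. -/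
lemma exists_mem_transversals_two_mul_card_filter_le {δ : Type*} {D : Finset δ}
    {N : δ → Finset α} (hfM : ∀ x ∈ M, f x ∈ M) (hff : ∀ x ∈ M, f (f x) = x)
    (hfx : ∀ x ∈ M, f x ≠ x) (hN : ∀ d ∈ D, N d ⊆ M ∧ 1 < #(N d)) :
    ∃ S ∈ transversals M f, 2 * #{d ∈ D | N d ⊆ S ∨ Disjoint (N d) S} ≤ #D := by
  refine exists_mul_card_filter_le _ 2 (transversals_nonempty hfM hff hfx) fun d hd => ?_
  obtain ⟨x, hx, y, hy, hxy⟩ := one_lt_card.1 (hN d hd).2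
  refine le_trans (Nat.mul_le_mul_left 2 (card_le_card fun S hS => ?_))
    (two_mul_card_filter_mem_iff_mem_transversals_le hfM hff ((hN d hd).1 hx) hxy)
  rw [mem_filter] at hS ⊢
  refine ⟨hS.1, ?_⟩
  rcases hS.2 with hsub | hdisj
  · exact iff_of_true (hsub hx) (hsub hy)
  · exact iff_of_false (disjoint_left.1 hdisj hx) (disjoint_left.1 hdisj hy)

end Transversal

section Split

variable [Fintype V] [DecidableEq V] {G : SimpleGraph V} {γ : ℕ}
  {T S R : Finset V} {N : V → Finset V} {u d : V}

lemma exists_compl_adj_mem_insert_union_iff_notMem (hu : u ∈ T) (hd : d ∉ T)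
    (hud : Gᶜ.Adj u d) (hSM : S ⊆ T.erase u)
    (hcross : ∀ t ∈ T.erase u, ∃ w ∈ T.erase u, Gᶜ.Adj t w ∧ (t ∈ S ↔ w ∉ S))
    (hNadj : ∀ e ∈ Tᶜ.erase d, ∀ x ∈ N e, x ∈ T.erase u ∧ Gᶜ.Adj e x) (hR : R ⊆ Tᶜ.erase d)
    (hRsub : ∀ e ∈ R, ¬N e ⊆ S) (hRdisj : ∀ e ∈ Tᶜ.erase d, e ∉ R → ¬Disjoint (N e) S) (i : V) :
    ∃ j, Gᶜ.Adj i j ∧ (i ∈ insert u (S ∪ R) ↔ j ∉ insert u (S ∪ R)) := by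
  have hRT : ∀ x ∈ R, x ∉ T ∧ x ≠ d := fun x hx => by
    obtain ⟨hxd, hxT⟩ := mem_erase.1 (hR hx)
    exact ⟨mem_compl.1 hxT, hxd⟩
  have hmemT : ∀ x ∈ T, (x ∈ insert u (S ∪ R) ↔ x = u ∨ x ∈ S) := fun x hx => by
    have := fun h => (hRT x h).1 hx
    simp only [mem_insert, mem_union]
    tauto
  have hmemTc : ∀ x ∉ T, (x ∈ insert u (S ∪ R) ↔ x ∈ R) := fun x hx => by
    have := fun h => hx (mem_of_mem_erase (hSM h))
    have := fun h : x = u => hx (h ▸ hu)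
    simp only [mem_insert, mem_union]
    tauto
  by_cases hiT : i ∈ T
  · by_cases hiu : i = u
    · subst hiu
      refine ⟨d, hud, ?_⟩
      rw [hmemT i hiT, hmemTc d hd]
      exact iff_of_true (Or.inl rfl) fun h => (hRT d h).2 rfl
    · obtain ⟨w, hw, hiw, hS⟩ := hcross i (mem_erase.2 ⟨hiu, hiT⟩)
      refine ⟨w, hiw, ?_⟩
      rw [hmemT i hiT, hmemT w (mem_of_mem_erase hw)]
      simp only [hiu, ne_of_mem_erase hw, false_or, hS]
  · rw [hmemTc i hiT]
    by_cases hid : i = d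
    · subst hid
      refine ⟨u, hud.symm, ?_⟩
      rw [hmemT u hu]
      exact iff_of_false (fun h => (hRT i h).2 rfl) (not_not.2 (Or.inl rfl))
    have hiD : i ∈ Tᶜ.erase d := mem_erase.2 ⟨hid, mem_compl.2 hiT⟩
    by_cases hiR : i ∈ R
    · obtain ⟨x, hx, hxS⟩ := not_subset.1 (hRsub i hiR)
      obtain ⟨hxM, hix⟩ := hNadj i hiD x hx
      refine ⟨x, hix, iff_of_true hiR ?_⟩
      rw [hmemT x (mem_of_mem_erase hxM)]
      simp [ne_of_mem_erase hxM, hxS]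
    · obtain ⟨x, hx, hxS⟩ := not_disjoint_iff.1 (hRdisj i hiD hiR)
      refine ⟨x, (hNadj i hiD x hx).2, iff_of_false hiR ?_⟩
      rw [hmemT x (mem_of_mem_erase (hSM hxS))]
      simp [hxS]

/-- The cut is `insert u (S ∪ R)`, where `R` is half of `Tᶜ.erase d`, containing every `e` with
`N e` disjoint from `S` and no `e` with `N e ⊆ S`. -/
lemma RRobust.false_of_balanced_split [DecidableRel G.Adj] (hrob : RRobust G γ)
    (hV : Fintype.card V = 2 * γ) (hT : #T = γ + 1) (hu : u ∈ T) (hd : d ∉ T) (hud : Gᶜ.Adj u d)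
    (hSM : S ⊆ T.erase u) (hS : 2 * #S = γ)
    (hcross : ∀ t ∈ T.erase u, ∃ w ∈ T.erase u, Gᶜ.Adj t w ∧ (t ∈ S ↔ w ∉ S))
    (hNadj : ∀ e ∈ Tᶜ.erase d, ∀ x ∈ N e, x ∈ T.erase u ∧ Gᶜ.Adj e x)
    (hN : ∀ e ∈ Tᶜ.erase d, (N e).Nonempty)
    (hsplit : 2 * #{e ∈ Tᶜ.erase d | N e ⊆ S ∨ Disjoint (N e) S} ≤ #(Tᶜ.erase d)) : False := by
  set D := Tᶜ.erase d
  have hDcard : #D + 1 = γ - 1 := by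
    rw [card_erase_add_one (mem_compl.2 hd), card_compl, hV, hT]
    omega
  have hDisj : #{e ∈ D | Disjoint (N e) S} ≤ #S - 1 := by
    have := card_le_card (monotone_filter_right D (p := fun e => Disjoint (N e) S)
      (q := fun e => N e ⊆ S ∨ Disjoint (N e) S) fun _ _ => Or.inr)
    omega
  have hSub : #{e ∈ D | N e ⊆ S} ≤ #S - 1 := by
    have := card_le_card (monotone_filter_right D (p := fun e => N e ⊆ S)
      (q := fun e => N e ⊆ S ∨ Disjoint (N e) S) fun _ _ => Or.inl)
    omega
  have hsep : Disjoint {e ∈ D | Disjoint (N e) S} {e ∈ D | N e ⊆ S} :=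
    disjoint_filter.2 fun e he hdisj hsub => by
      obtain ⟨x, hx⟩ := hN e he
      exact disjoint_left.1 hdisj hx (hsub hx)
  obtain ⟨R, hRD, hDisjR, hRsub, hRcard⟩ :=
    exists_subsuperset_card_eq_of_disjoint (filter_subset _ D) hsep hDisj (by omega)
  have hcard : #(insert u (S ∪ R)) = γ := by
    have hSR : Disjoint S R := disjoint_left.2 fun x hx hxR =>
      mem_compl.1 (mem_of_mem_erase (hRD hxR)) (mem_of_mem_erase (hSM hx))
    have huSR : u ∉ S ∪ R := fun h => (mem_union.1 h).elim (fun h => ne_of_mem_erase (hSM h) rfl)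
      fun h => mem_compl.1 (mem_of_mem_erase (hRD h)) hu
    rw [card_insert_of_notMem huSR, card_union_of_disjoint hSR, hRcard]
    omega
  obtain ⟨i, hi⟩ := hrob.exists_forall_compl_adj_mem_iff hV hcard
  obtain ⟨j, hij, hj⟩ := exists_compl_adj_mem_insert_union_iff_notMem hu hd hud hSM hcross
    hNadj hRD (fun e he hsub => disjoint_left.1 hRsub he (mem_filter.2 ⟨hRD he, hsub⟩))
    (fun e he heR hdisj => heR (hDisjR (mem_filter.2 ⟨he, hdisj⟩))) i
  have := hi j hij
  tauto

end Split

namespace SimpleGraph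

variable [Fintype V] [DecidableEq V] {G : SimpleGraph V} [DecidableRel G.Adj] {γ : ℕ}
  {T : Finset V} {u : V}

lemma IsTight.exists_notMem_adj (h : G.IsTight γ T u) (hrob : RRobust G γ)
    (hV : Fintype.card V = 2 * γ) (hγ : 2 ≤ γ) :
    ∃ d ∉ T, Gᶜ.Adj u d ∧ G.nonAdjCard d T = 1 := by
  obtain ⟨d, hd, hd1⟩ := hrob.exists_notMem_nonAdjCard_le_one hV hγ h.card_eq
  obtain ⟨w, hw, hdw⟩ := h.exists_adj_ne (by omega) hd (v := d) (fun h' => hd (h' ▸ h.apex_mem))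
  obtain rfl := h.eq_of_adj hd hd1 hw hdw.2
  exact ⟨d, hd, hdw.2.symm, le_antisymm hd1 (h.one_le_nonAdjCard (by omega) hd)⟩

/-- On the balanced cut `insert v Tᶜ` with `v ≠ u`, every vertex of `insert v Tᶜ` has a
non-neighbour in `T.erase v`, so robustness yields a vertex of `T.erase v` adjacent to all of
`insert v Tᶜ`. -/
lemma IsTight.exists_nonAdjCard_compl_eq_zero (h : G.IsTight γ T u)
    (hrob : RRobust G γ) (hV : Fintype.card V = 2 * γ) (hγ : 2 ≤ γ) :
    ∃ z ∈ T, z ≠ u ∧ G.nonAdjCard z Tᶜ = 0 := by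
  obtain ⟨d, hd, hud, -⟩ := h.exists_notMem_adj hrob hV hγ
  obtain ⟨v, hv, hvu⟩ := exists_mem_ne (by rw [h.card_eq]; omega : 1 < #T) u
  have hcard : #(insert v Tᶜ) = γ := by
    rw [card_insert_of_notMem (by simpa using hv), card_compl, hV, h.card_eq]
    omega
  obtain ⟨z, hz⟩ := hrob.exists_forall_compl_adj_mem_iff hV hcard
  have hcross : ∀ i ∈ insert v Tᶜ, ∃ j ∈ T, j ≠ v ∧ Gᶜ.Adj i j := by
    intro i hi
    rcases mem_insert.1 hi with rfl | hi
    · obtain ⟨j, hj, hij⟩ := nonAdjCard_pos.1 (h.nonAdjCard_of_ne i hv hvu).ge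
      exact ⟨j, hj, hij.ne.symm, hij⟩
    · exact h.exists_adj_ne (by omega) (mem_compl.1 hi) hvu
  have hnotMem : ∀ j ∈ T, j ≠ v → j ∉ insert v Tᶜ := fun j hj hjv => by
    simp [hjv, hj]
  have hzS : z ∉ insert v Tᶜ := fun hzS => by
    obtain ⟨j, hj, hjv, hzj⟩ := hcross z hzS
    exact hnotMem j hj hjv ((hz j hzj).1 hzS)
  have hzT : z ∈ T := by simpa using (not_or.1 (mt mem_insert.2 hzS)).2
  have hz0 : G.nonAdjCard z Tᶜ = 0 := nonAdjCard_eq_zero.2 fun j hj hzj =>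
    hzS ((hz j hzj).2 (mem_insert_of_mem hj))
  refine ⟨z, hzT, fun hzu => ?_, hz0⟩
  rw [hzu] at hz0
  exact nonAdjCard_eq_zero.1 hz0 d (mem_compl.2 hd) hud

/-- The new set is `insert d (T.erase m)`, where `z ∈ T` has no non-neighbour outside `T`, `m` is
its non-neighbour in `T` and `d` an outside vertex whose only non-neighbour in `T` is `u`. -/
lemma IsTight.exists_isTight_degree_compl_eq_one (h : G.IsTight γ T u)
    (hrob : RRobust G γ) (hV : Fintype.card V = 2 * γ) (hγ : 2 ≤ γ) :
    ∃ T' z, G.IsTight γ T' z ∧ Gᶜ.degree z = 1 := by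
  obtain ⟨d, hd, -, hd1⟩ := h.exists_notMem_adj hrob hV hγ
  obtain ⟨z, hzT, hzu, hz0⟩ := h.exists_nonAdjCard_compl_eq_zero hrob hV hγ
  have hz1 := h.nonAdjCard_of_ne z hzT hzu
  obtain ⟨m, hm, hzm⟩ := nonAdjCard_pos.1 hz1.ge
  have hmu : m ≠ u := fun hmu => h.not_adj hzT (hmu ▸ hzm).symm
  have hdm : ¬Gᶜ.Adj d m := fun hdm => hmu (h.eq_of_adj hd hd1.le hm hdm)
  have hzd : ¬Gᶜ.Adj z d := nonAdjCard_eq_zero.1 hz0 d (mem_compl.2 hd)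
  have hdT : d ∉ T.erase m := fun hd' => hd (mem_of_mem_erase hd')
  have hcard : #(insert d (T.erase m)) = γ + 1 := by
    rw [card_insert_of_notMem hdT, card_erase_add_one hm, h.card_eq]
  have hsum : G.nonAdjDegSum (insert d (T.erase m)) = γ := by
    have := nonAdjDegSum_erase_add (G := G) hm
    rw [h.nonAdjCard_of_ne m hm hmu, h.nonAdjDegSum_eq] at this
    rw [nonAdjDegSum_insert hdT, nonAdjCard_erase_of_not_adj hdm, hd1]
    omega
  have hdens := h.isDensest.of_card_eq (hcard.trans h.card_eq.symm)
    (hsum.trans h.nonAdjDegSum_eq.symm)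
  have hz0' : G.nonAdjCard z (insert d (T.erase m)) = 0 := by
    have := nonAdjCard_erase_add_one hm hzm
    rw [nonAdjCard_insert hdT, if_neg hzd]
    omega
  obtain ⟨d', hd', hd'1⟩ := hrob.exists_notMem_nonAdjCard_le_one hV hγ hcard
  obtain ⟨z', hz'⟩ := hdens.exists_isTight hcard hd' hd'1 hsum
  obtain rfl := hz'.eq_of_nonAdjCard_eq_zero (mem_insert_of_mem (mem_erase.2 ⟨hzm.ne, hzT⟩)) hz0'
  exact ⟨_, z, hz', by rw [← nonAdjCard_add_nonAdjCard_compl (S := T), hz1, hz0]⟩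

lemma IsTight.degree_compl_ne_one (h : G.IsTight γ T u) (hrob : RRobust G γ)
    (hV : Fintype.card V = 2 * γ) (hγ : 2 ≤ γ) : Gᶜ.degree u ≠ 1 := by
  intro hdeg
  obtain ⟨d, hd, hud, -⟩ := h.exists_notMem_adj hrob hV hγ
  have honly : ∀ w, Gᶜ.Adj u w → w = d := fun w huw =>
    (degree_eq_one_iff_existsUnique_adj.1 hdeg).unique huw hud
  obtain ⟨f, hfM, hff, hadj⟩ := h.exists_involution
  have hN : ∀ e ∈ Tᶜ.erase d, Gᶜ.neighborFinset e ∩ T.erase u ⊆ T.erase u ∧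
      1 < #(Gᶜ.neighborFinset e ∩ T.erase u) := by
    intro e he
    have heT := mem_compl.1 (mem_of_mem_erase he)
    have heu : ¬Gᶜ.Adj e u := fun heu => ne_of_mem_erase he (honly e heu.symm)
    refine ⟨inter_subset_right, ?_⟩
    change 1 < G.nonAdjCard e (T.erase u)
    rw [nonAdjCard_erase_of_not_adj heu]
    by_contra hle
    obtain ⟨w, hw, hew⟩ := nonAdjCard_pos.1 (h.one_le_nonAdjCard (by omega) heT)
    exact heu (h.eq_of_adj heT (not_lt.1 hle) hw hew ▸ hew)
  obtain ⟨S, hS, hsplit⟩ := exists_mem_transversals_two_mul_card_filter_le hfM hff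
    (fun t ht => (hadj t ht).ne.symm) hN
  have hScard := two_mul_card_of_mem_transversals hfM hff hS
  rw [card_erase_of_mem h.apex_mem, h.card_eq, add_tsub_cancel_right] at hScard
  obtain ⟨hSM, hSf⟩ := mem_transversals.1 hS
  exact hrob.false_of_balanced_split hV h.card_eq h.apex_mem hd hud hSM hScard
    (fun t ht => ⟨f t, hfM t ht, hadj t ht, hSf t ht⟩)
    (fun e _ x hx => ⟨(mem_inter.1 hx).2, (mem_neighborFinset _ _ _).1 (mem_inter.1 hx).1⟩)
    (fun e he => card_pos.1 (one_pos.trans (hN e he).2)) hsplit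

end SimpleGraph

section Main

variable [Fintype V] [DecidableEq V] {G : SimpleGraph V} [DecidableRel G.Adj] {γ : ℕ}

lemma RRobust.exists_card_eq_nonAdjDegSum_lt (hrob : RRobust G γ)
    (hV : Fintype.card V = 2 * γ) : ∃ T : Finset V, #T = γ + 1 ∧ G.nonAdjDegSum T < γ := by
  obtain hγ | hγ := (show γ = 1 ∨ 2 ≤ γ by have := hrob.1; omega)
  · subst hγ
    refine ⟨univ, by rw [card_univ, hV], Nat.lt_one_iff.2 <| sum_eq_zero fun t _ =>
      nonAdjCard_eq_zero.2 fun w _ => ?_⟩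
    simp [hrob.eq_top_of_card_eq_two hV]
  obtain ⟨T, hT, hdens⟩ := G.exists_isDensest (k := γ + 1) (by omega)
  obtain ⟨d, hd, hd1⟩ := hrob.exists_notMem_nonAdjCard_le_one hV hγ hT
  have hlt := hdens.nonAdjDegSum_lt hd hd1 (card_pos.1 (by omega))
  refine ⟨T, hT, lt_of_le_of_ne (by omega) fun hsum => ?_⟩
  obtain ⟨u, hu⟩ := hdens.exists_isTight hT hd hd1 hsum
  obtain ⟨_, z, hz, hdeg⟩ := hu.exists_isTight_degree_compl_eq_one hrob hV hγ
  exact hz.degree_compl_ne_one hrob hV hγ hdeg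

end Main

/-- If `G` is a graph on an even number `n` of vertices and `γ = n/2`, and `G` is
`γ`-robust, then there is a subset `V_S` of `γ + 1` vertices such that the induced
subgraph of `G` on `V_S` has at least `⌊(γ² + 2)/2⌋` edges. -/
theorem stmt4 [Fintype V] [DecidableEq V] (G : SimpleGraph V) [DecidableRel G.Adj]
    (n γ : ℕ) (hn : Fintype.card V = n) (heven : Even n) (hγ : γ = n / 2)
    (hrob : RRobust G γ) :
    ∃ VS : Finset V, VS.card = γ + 1 ∧
      (γ ^ 2 + 2) / 2 ≤ {e : Sym2 V | e ∈ G.edgeSet ∧ ∀ v ∈ e, v ∈ VS}.ncard := by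
  have hV : Fintype.card V = 2 * γ := by
    obtain ⟨m, hm⟩ := heven
    omega
  obtain ⟨T, hT, hlt⟩ := hrob.exists_card_eq_nonAdjDegSum_lt hV
  refine ⟨T, hT, ?_⟩
  have hcount := G.two_mul_ncard_edges_add_nonAdjDegSum T
  rw [hT, add_tsub_cancel_right, add_mul, one_mul, ← sq] at hcount
  omega
end

section
/- Let G = (V,E) be a finite simple undirected graph on n vertices, where n > 1 is odd, let γ = ⌈n/2⌉, and let s be an integer with s ≥ ⌊n/2⌋. Then G is (γ,s)-robust if and only if G is the complete graph on n vertices. -/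
open Finset

variable {V : Type*}

/-- `XSet G r S` is the set of vertices of `S` having at least `r` neighbors outside `S`. -/
def XSet [Fintype V] [DecidableEq V] (G : SimpleGraph V) [DecidableRel G.Adj]
    (r : ℕ) (S : Finset V) : Finset V :=
  S.filter fun i => r ≤ (G.neighborFinset i \ S).card

/-- `G` is `(r,s)`-robust (for integers `r ≥ 1`, `s ≥ 0`) if for every pair of nonempty
disjoint subsets `S1, S2` of the vertex set, either all vertices of `S1` have at least `r`
neighbors outside `S1`, or all vertices of `S2` have at least `r` neighbors outside `S2`,
or `|X^r_{S1}| + |X^r_{S2}| ≥ s`. -/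
def RSRobust [Fintype V] [DecidableEq V] (G : SimpleGraph V) [DecidableRel G.Adj]
    (r s : ℕ) : Prop :=
  1 ≤ r ∧ ∀ S1 S2 : Finset V, S1.Nonempty → S2.Nonempty → Disjoint S1 S2 →
    (XSet G r S1).card = S1.card ∨ (XSet G r S2).card = S2.card ∨
      s ≤ (XSet G r S1).card + (XSet G r S2).card

/-- For odd `n > 1`, `γ = ⌈n/2⌉`, and `s ≥ ⌊n/2⌋`: a graph on `n` vertices is
`(γ,s)`-robust iff it is the complete graph. -/
theorem stmt9 [Fintype V] [DecidableEq V] (G : SimpleGraph V) [DecidableRel G.Adj]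
    (n γ s : ℕ) (hn : Fintype.card V = n) (hn1 : 1 < n) (hodd : Odd n)
    (hγ : γ = (n + 1) / 2) (hs : n / 2 ≤ s) :
    RSRobust G γ s ↔ G = ⊤ := by
  obtain ⟨k, hk⟩ := hodd
  constructor
  · rintro ⟨-, hrob⟩
    by_contra hG
    obtain ⟨u, v, huv, hadj⟩ : ∃ u v, u ≠ v ∧ ¬ G.Adj u v := by
      by_contra h
      push_neg at h
      refine hG ?_
      ext a b
      simp only [SimpleGraph.top_adj]
      exact ⟨fun ha => G.ne_of_adj ha, fun hne => h a b hne⟩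
    -- choose S2 of size n/2 containing v, avoiding u
    obtain ⟨S2, hvS2, hS2u, hS2card⟩ :=
      Finset.exists_subsuperset_card_eq (s := {v}) (t := univ.erase u) (n := n / 2)
        (by simp [huv.symm]) (by simp; omega)
        (by rw [Finset.card_erase_of_mem (mem_univ u), card_univ, hn]; omega)
    have hvS2' : v ∈ S2 := hvS2 (mem_singleton_self v)
    have huS2 : u ∉ S2 := fun h => (Finset.mem_erase.mp (hS2u h)).1 rfl
    set S1 : Finset V := univ \ S2 with hS1def
    have huS1 : u ∈ S1 := mem_sdiff.mpr ⟨mem_univ u, huS2⟩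
    have hS1card : S1.card = n - n / 2 := by
      rw [hS1def, card_sdiff_of_subset (subset_univ _), card_univ, hn, hS2card]
    have hdisj : Disjoint S1 S2 := sdiff_disjoint
    -- X1 empty
    have hX1 : XSet G γ S1 = ∅ := by
      rw [Finset.eq_empty_iff_forall_notMem]
      intro i hi
      rw [XSet, mem_filter] at hi
      have hsub : G.neighborFinset i \ S1 ⊆ S2 := by
        intro x hx
        rw [mem_sdiff, hS1def, mem_sdiff] at hx
        have := hx.2
        push_neg at this
        exact this (mem_univ x)
      have := (card_le_card hsub).trans_eq hS2card
      omega
    -- v not in X2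
    have hvX2 : v ∉ XSet G γ S2 := by
      rw [XSet, mem_filter]
      rintro ⟨-, hcard⟩
      have hsub : G.neighborFinset v \ S2 ⊆ (univ \ S2).erase u := by
        intro x hx
        rw [mem_sdiff, SimpleGraph.mem_neighborFinset] at hx
        rw [mem_erase, mem_sdiff]
        refine ⟨fun hxu => hadj ?_, mem_univ x, hx.2⟩
        subst hxu; exact hx.1.symm
      have hcard2 : ((univ \ S2).erase u).card = n - n / 2 - 1 := by
        rw [card_erase_of_mem (mem_sdiff.mpr ⟨mem_univ u, huS2⟩), card_sdiff_of_subset (subset_univ _),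
          card_univ, hn, hS2card]
      have := (card_le_card hsub).trans_eq hcard2
      omega
    have hX2lt : (XSet G γ S2).card < S2.card :=
      card_lt_card (ssubset_iff_of_subset (filter_subset _ _) |>.mpr ⟨v, hvS2', hvX2⟩)
    rcases hrob S1 S2 ⟨u, huS1⟩ ⟨v, hvS2'⟩ hdisj with h | h | h
    · rw [hX1] at h; simp at h; omega
    · omega
    · rw [hX1] at h; simp at h; omega
  · intro hG
    refine ⟨by omega, fun S1 S2 hS1 hS2 hdisj => ?_⟩
    have hsum : S1.card + S2.card ≤ n := by
      have := card_le_card (subset_univ (S1 ∪ S2))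
      rw [card_union_of_disjoint hdisj, card_univ, hn] at this
      exact this
    have key : ∀ S : Finset V, S.card ≤ n / 2 → (XSet G γ S).card = S.card := by
      intro S hScard
      congr 1
      rw [XSet, filter_eq_self]
      intro i hi
      have heq : G.neighborFinset i \ S = univ \ S := by
        ext x
        simp only [mem_sdiff, SimpleGraph.mem_neighborFinset, hG, SimpleGraph.top_adj,
          mem_univ, true_and]
        constructor
        · rintro ⟨-, hx⟩; exact hx
        · intro hx; exact ⟨fun h => hx (h ▸ hi), hx⟩
      rw [heq, card_sdiff_of_subset (subset_univ _), card_univ, hn]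
      omega
    rcases le_or_gt S1.card (n / 2) with h | h
    · exact Or.inl (key S1 h)
    · exact Or.inr (Or.inl (key S2 (by omega)))
end

section
/- Let G = (V,E) be a finite simple undirected graph on n vertices that is (r,s)-robust, where 1 ≤ r ≤ ⌈n/2⌉ and 1 ≤ s ≤ n. Then the minimum degree δ_min(G) of G satisfies: δ_min(G) ≥ 2r-2 if s ≥ r, and δ_min(G) ≥ r+s-1 if s < r. -/
/-!
Let `v` be a vertex of minimum degree `δ` and suppose `δ < (r - 1) + min (r - 1) s`.
Put `S₁ = {v} ∪ B`, where `B` consists of `δ - (r - 1)` neighbours of `v`, and `S₂ = S₁ᶜ`.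
Then `v` keeps fewer than `r` neighbours outside `S₁`, so `|X^r_{S₁}| ≤ |B| < |S₁|`; and
`|S₁| < r`, so no vertex of `S₂` has `r` neighbours outside `S₂`, i.e. `X^r_{S₂} = ∅ ≠ S₂`.
Hence `s ≤ |X^r_{S₁}| ≤ |B| < s`, a contradiction.
-/

open Finset

variable {V : Type*}

section XSet

variable [Fintype V] [DecidableEq V] {G : SimpleGraph V} [DecidableRel G.Adj] {r : ℕ}

theorem mem_XSet {S : Finset V} {v : V} :
    v ∈ XSet G r S ↔ v ∈ S ∧ r ≤ (G.neighborFinset v \ S).card :=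
  mem_filter

theorem XSet_compl_eq_empty {S : Finset V} (hS : S.card < r) : XSet G r Sᶜ = ∅ := by
  refine eq_empty_of_forall_notMem fun u hu => ?_
  have hout : G.neighborFinset u \ Sᶜ ⊆ S := fun x hx => by
    simpa using (mem_sdiff.mp hx).2
  exact (card_le_card hout).trans_lt hS |>.not_ge (mem_XSet.mp hu).2

theorem card_XSet_insert_le {v : V} {B : Finset V} (hB : B ⊆ G.neighborFinset v)
    (hdeg : G.degree v < r + B.card) : (XSet G r (insert v B)).card ≤ B.card := by
  have hBdeg : B.card ≤ G.degree v := G.card_neighborFinset_eq_degree v ▸ card_le_card hB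
  have hv : v ∉ XSet G r (insert v B) := fun hv => by
    have : (G.neighborFinset v \ insert v B).card < r :=
      calc (G.neighborFinset v \ insert v B).card
          ≤ (G.neighborFinset v \ B).card :=
            card_le_card (sdiff_subset_sdiff subset_rfl (subset_insert v B))
        _ = G.degree v - B.card := by rw [card_sdiff_of_subset hB, G.card_neighborFinset_eq_degree]
        _ < r := by omega
    exact this.not_ge (mem_XSet.mp hv).2
  refine card_le_card fun x hx => ?_
  have hxv : x ≠ v := by rintro rfl; exact hv hx
  simpa [hxv] using (mem_XSet.mp hx).1

end XSet

namespace RSRobust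

variable [Fintype V] [DecidableEq V] {G : SimpleGraph V} [DecidableRel G.Adj] {r s : ℕ}

theorem le_degree (hrob : RSRobust G r s) (hs : 1 ≤ s) (hrV : r ≤ Fintype.card V) (v : V) :
    r - 1 + min (r - 1) s ≤ G.degree v := by
  by_contra! hlt
  obtain ⟨B, hBN, hBcard⟩ := exists_subset_card_eq (s := G.neighborFinset v)
    (n := G.degree v - (r - 1)) (by rw [G.card_neighborFinset_eq_degree]; omega)
  have hvB : v ∉ B := fun h => G.notMem_neighborFinset_self v (hBN h)
  set S₁ := insert v B
  have hS₁card : S₁.card = B.card + 1 := card_insert_of_notMem hvB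
  have hX₁ : (XSet G r S₁).card ≤ B.card := card_XSet_insert_le hBN (by omega)
  have hX₂ : XSet G r S₁ᶜ = ∅ := XSet_compl_eq_empty (by omega)
  have hS₂ : S₁ᶜ.Nonempty := by
    rw [← card_pos, card_compl]; omega
  rcases hrob.2 S₁ S₁ᶜ (insert_nonempty v B) hS₂ disjoint_compl_right with h | h | h
  · omega
  · rw [hX₂, card_empty] at h
    exact hS₂.ne_empty (card_eq_zero.mp h.symm)
  · rw [hX₂, card_empty] at h
    omega

theorem le_minDegree (hrob : RSRobust G r s) (hs : 1 ≤ s) (hrV : r ≤ Fintype.card V) :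
    r - 1 + min (r - 1) s ≤ G.minDegree := by
  have : Nonempty V := Fintype.card_pos_iff.mp (by have := hrob.1; omega)
  exact G.le_minDegree_of_forall_le_degree _ (hrob.le_degree hs hrV)

end RSRobust

theorem stmt10_general [Fintype V] [DecidableEq V] (G : SimpleGraph V) [DecidableRel G.Adj]
    (n r s : ℕ) (hn : Fintype.card V = n) (hrn : r ≤ (n + 1) / 2)
    (hs1 : 1 ≤ s) (hrob : RSRobust G r s) :
    (r ≤ s → 2 * r - 2 ≤ G.minDegree) ∧ (s < r → r + s - 1 ≤ G.minDegree) := by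
  have h := hrob.le_minDegree hs1 (by omega)
  constructor <;> intro <;> omega

/-- Minimum-degree bound for `(r,s)`-robust graphs: if `G` on `n` vertices is
`(r,s)`-robust with `1 ≤ r ≤ ⌈n/2⌉` and `1 ≤ s ≤ n`, then the minimum degree of `G` is
at least `2r - 2` when `s ≥ r`, and at least `r + s - 1` when `s < r`. -/
theorem stmt10 [Fintype V] [DecidableEq V] (G : SimpleGraph V) [DecidableRel G.Adj]
    (n r s : ℕ) (hn : Fintype.card V = n) (hr1 : 1 ≤ r) (hrn : r ≤ (n + 1) / 2)
    (hs1 : 1 ≤ s) (hsn : s ≤ n) (hrob : RSRobust G r s) :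
    (r ≤ s → 2 * r - 2 ≤ G.minDegree) ∧ (s < r → r + s - 1 ≤ G.minDegree) :=
  stmt10_general G n r s hn hrn hs1 hrob
end

section
/- Let G = (V,E) be a finite simple undirected graph on n vertices, where n is even, and let γ = n/2. If G is (γ,γ)-robust, then the number of edges satisfies |E| ≥ 2γ(γ-1) + ⌈γ/2⌉. -/
open Finset

variable {V : Type*}

section Aux

variable [Fintype V] [DecidableEq V] (G : SimpleGraph V) [DecidableRel G.Adj]

/-- The set of non-neighbors of `i` (excluding `i` itself). -/
private def NN (i : V) : Finset V := univ \ insert i (G.neighborFinset i)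

private lemma mem_NN {i j : V} : j ∈ NN G i ↔ j ≠ i ∧ ¬ G.Adj i j := by
  simp [NN, mem_sdiff, SimpleGraph.mem_neighborFinset]

private lemma card_NN (i : V) : (NN G i).card + (1 + G.degree i) = Fintype.card V := by
  have h2 := card_sdiff_add_card_eq_card (subset_univ (insert i (G.neighborFinset i)))
  rw [card_insert_of_notMem (G.notMem_neighborFinset_self i)] at h2
  rw [SimpleGraph.card_neighborFinset_eq_degree] at h2
  rw [← card_univ (α := V)]
  unfold NN
  omega

/-- If there are at least `k` non-neighbors of `i` outside `S`, and
`|V| < γ + k + |S|`, then `i` does not have `γ` neighbors outside `S`. -/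
private lemma notMemX {γ : ℕ} {S : Finset V} {i : V} (hiS : i ∈ S) {k : ℕ}
    (hk : k ≤ ((NN G i) \ S).card)
    (h : Fintype.card V < γ + k + S.card) : i ∉ XSet G γ S := by
  intro hX
  have h1 : γ ≤ (G.neighborFinset i \ S).card := (mem_filter.mp hX).2
  have hd1 : Disjoint (G.neighborFinset i \ S) ((NN G i) \ S) := by
    have : Disjoint (G.neighborFinset i) (NN G i) := by
      refine Finset.disjoint_left.mpr fun x hx hx' => ?_
      exact (mem_NN G |>.mp hx').2 ((SimpleGraph.mem_neighborFinset _ _ _).mp hx)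
    exact this.mono (sdiff_subset) (sdiff_subset)
  have hd2 : Disjoint ((G.neighborFinset i \ S) ∪ ((NN G i) \ S)) S := by
    refine Finset.disjoint_left.mpr fun x hx hx' => ?_
    rcases mem_union.mp hx with hx | hx
    · exact (mem_sdiff.mp hx).2 hx'
    · exact (mem_sdiff.mp hx).2 hx'
  have hcard : ((G.neighborFinset i \ S) ∪ ((NN G i) \ S) ∪ S).card =
      (G.neighborFinset i \ S).card + ((NN G i) \ S).card + S.card := by
    rw [card_union_of_disjoint hd2, card_union_of_disjoint hd1]
  have hle : ((G.neighborFinset i \ S) ∪ ((NN G i) \ S) ∪ S).card ≤ Fintype.card V := by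
    rw [← card_univ]; exact card_le_card (subset_univ _)
  omega

private lemma nn_le_one {γ : ℕ} (hcard : Fintype.card V = 2 * γ)
    (hrob : RSRobust G γ γ) (i : V) : (NN G i).card ≤ 1 := by
  by_contra hcon
  push_neg at hcon
  set d := (NN G i).card with hd
  have hdeg := card_NN G i
  have hγ2 : 2 ≤ γ := by omega
  set t := min d γ with ht
  have ht2 : 2 ≤ t := by omega
  have hF : γ - t ≤ (G.neighborFinset i).card := by
    rw [SimpleGraph.card_neighborFinset_eq_degree]; omega
  obtain ⟨F, hFsub, hFcard⟩ := exists_subset_card_eq hF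
  have hiF : i ∉ F := fun h => G.notMem_neighborFinset_self i (hFsub h)
  set S1 : Finset V := insert i F with hS1
  have hiS1 : i ∈ S1 := mem_insert_self _ _
  have hS1card : S1.card = γ - t + 1 := by rw [hS1, card_insert_of_notMem hiF, hFcard]
  set S2 : Finset V := univ \ S1 with hS2
  have hS2card : S2.card + S1.card = 2 * γ := by
    rw [hS2, card_sdiff_add_card_eq_card (subset_univ _), card_univ, hcard]
  -- NN i is disjoint from S1
  have hNS1 : NN G i \ S1 = NN G i := by
    refine Finset.sdiff_eq_self_iff_disjoint.mpr (Finset.disjoint_left.mpr fun x hx hx' => ?_)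
    have hx2 := mem_NN G |>.mp hx
    rcases mem_insert.mp hx' with rfl | hxF
    · exact hx2.1 rfl
    · exact hx2.2 ((SimpleGraph.mem_neighborFinset _ _ _).mp (hFsub hxF))
  have hiX : i ∉ XSet G γ S1 := by
    refine notMemX G hiS1 (k := d) (by rw [hNS1]) ?_
    omega
  have hX2 : XSet G γ S2 = ∅ := by
    refine eq_empty_of_forall_notMem fun j hj => ?_
    have hjS2 : j ∈ S2 := mem_filter.mp hj |>.1
    exact notMemX G hjS2 (k := 0) (Nat.zero_le _) (by omega) hj
  have hXS1sub : XSet G γ S1 ⊆ S1.erase i := by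
    intro x hx
    refine mem_erase.mpr ⟨fun h => hiX (h ▸ hx), (mem_filter.mp hx).1⟩
  have hXS1card : (XSet G γ S1).card ≤ γ - t := by
    have := card_le_card hXS1sub
    rwa [card_erase_of_mem hiS1, hS1card, Nat.add_sub_cancel] at this
  have hne1 : S1.Nonempty := ⟨i, hiS1⟩
  have hne2 : S2.Nonempty := card_pos.mp (by omega)
  rcases hrob.2 S1 S2 hne1 hne2 disjoint_sdiff with h | h | h
  · have heq : XSet G γ S1 = S1 := eq_of_subset_of_card_le (filter_subset _ _) h.ge
    exact hiX (by rw [heq]; exact hiS1)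
  · rw [hX2, card_empty] at h; omega
  · rw [hX2, card_empty] at h; omega

private lemma matched_le {γ : ℕ} (hcard : Fintype.card V = 2 * γ)
    (hrob : RSRobust G γ γ) :
    (univ.filter fun i : V => (NN G i).card = 1).card ≤ γ := by
  by_contra hcon
  push_neg at hcon
  set M := univ.filter fun i : V => (NN G i).card = 1 with hM
  have hA1 := nn_le_one G hcard hrob
  have hex : ∀ i : V, ∃ j, i ∈ M → NN G i = {j} := by
    intro i
    by_cases h : i ∈ M
    · obtain ⟨j, hj⟩ := card_eq_one.mp ((mem_filter.mp h).2)
      exact ⟨j, fun _ => hj⟩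
    · exact ⟨i, fun h' => absurd h' h⟩
  choose σ hσ using hex
  have hσmem : ∀ i ∈ M, σ i ∈ NN G i := fun i hi => (hσ i hi) ▸ mem_singleton_self _
  have hσM : ∀ i ∈ M, σ i ∈ M ∧ σ (σ i) = i := by
    intro i hi
    have hbase := mem_NN G |>.mp (hσmem i hi)
    have h1 : i ∈ NN G (σ i) := by
      refine mem_NN G |>.mpr ⟨fun h => hbase.1 h.symm, fun h => hbase.2 h.symm⟩
    have h2 : (NN G (σ i)).card = 1 :=
      le_antisymm (hA1 _) (card_pos.mpr ⟨i, h1⟩)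
    have h3 : σ i ∈ M := mem_filter.mpr ⟨mem_univ _, h2⟩
    have h5 : i = σ (σ i) := mem_singleton.mp ((hσ _ h3) ▸ h1)
    exact ⟨h3, h5.symm⟩
  have hσne : ∀ i ∈ M, σ i ≠ i := fun i hi => (mem_NN G |>.mp (hσmem i hi)).1
  -- split M into two halves using an ordering
  let e := Fintype.equivFin V
  set A0 := M.filter (fun i => e i < e (σ i)) with hA0
  set M1 := M.filter (fun i => e (σ i) < e i) with hM1
  have hene : ∀ i ∈ M, e i ≠ e (σ i) := fun i hi h =>
    hσne i hi (e.injective h.symm)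
  have hM1eq : M1 = M \ A0 := by
    ext x
    simp only [hM1, hA0, mem_filter, mem_sdiff]
    constructor
    · rintro ⟨hxM, hlt⟩
      exact ⟨hxM, fun h => lt_asymm hlt h.2⟩
    · rintro ⟨hxM, hnot⟩
      refine ⟨hxM, ?_⟩
      have h1 : ¬ e x < e (σ x) := fun h => hnot ⟨hxM, h⟩
      have h2 := hene x hxM
      omega
  have hA0M' : A0 ⊆ M := filter_subset _ _
  have hsplit : A0.card + M1.card = M.card := by
    rw [hM1eq, card_sdiff_of_subset hA0M']
    have := card_le_card hA0M'
    omega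
  have hbij : A0.card = M1.card := by
    refine card_bij (fun i _ => σ i) ?_ ?_ ?_
    · intro a ha
      have haM := (mem_filter.mp ha).1
      refine mem_filter.mpr ⟨(hσM a haM).1, ?_⟩
      rw [(hσM a haM).2]
      exact (mem_filter.mp ha).2
    · intro a ha b hb h
      have haM := (mem_filter.mp ha).1
      have hbM := (mem_filter.mp hb).1
      have := congrArg σ h
      rwa [(hσM a haM).2, (hσM b hbM).2] at this
    · intro b hb
      have hbM := (mem_filter.mp hb).1
      refine ⟨σ b, ?_, (hσM b hbM).2⟩
      refine mem_filter.mpr ⟨(hσM b hbM).1, ?_⟩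
      rw [(hσM b hbM).2]
      exact (mem_filter.mp hb).2
  have hMle : M.card ≤ 2 * γ := by
    rw [← hcard, ← card_univ]; exact card_le_card (subset_univ _)
  have hUcard : (univ \ M).card + M.card = 2 * γ := by
    rw [card_sdiff_add_card_eq_card (subset_univ _), card_univ, hcard]
  obtain ⟨F, hFsub, hFcard⟩ := exists_subset_card_eq
    (show γ - A0.card ≤ (univ \ M).card by omega)
  have hA0M : A0 ⊆ M := filter_subset _ _
  have hM1M : M1 ⊆ M := filter_subset _ _
  have hdisjA : Disjoint A0 F := Finset.disjoint_left.mpr fun x hx hx' =>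
    (mem_sdiff.mp (hFsub hx')).2 (hA0M hx)
  set A : Finset V := A0 ∪ F with hA
  have hAcard : A.card = γ := by
    rw [hA, card_union_of_disjoint hdisjA, hFcard]; omega
  set B : Finset V := univ \ A with hB
  have hBcard : B.card = γ := by
    rw [hB, card_sdiff_of_subset (subset_univ _), card_univ, hcard, hAcard]; omega
  have hA0ssub : A0 ⊆ A := subset_union_left
  -- partners of A0 lie outside A
  have hσA : ∀ i ∈ A0, σ i ∉ A := by
    intro i hi hmem
    have hiM := hA0M hi
    rcases mem_union.mp hmem with h | h
    · have h2 := (mem_filter.mp h).2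
      rw [(hσM i hiM).2] at h2
      exact lt_asymm h2 (mem_filter.mp hi).2
    · exact (mem_sdiff.mp (hFsub h)).2 ((hσM i hiM).1)
  have hM1B : M1 ⊆ B := by
    intro j hj
    have hjM := hM1M hj
    refine mem_sdiff.mpr ⟨mem_univ _, fun hmem => ?_⟩
    rcases mem_union.mp hmem with h | h
    · exact lt_asymm (mem_filter.mp h).2 (mem_filter.mp hj).2
    · exact (mem_sdiff.mp (hFsub h)).2 hjM
  have hσB : ∀ j ∈ M1, σ j ∉ B := by
    intro j hj hmem
    have hjM := hM1M hj
    refine (mem_sdiff.mp hmem).2 (hA0ssub (mem_filter.mpr ⟨(hσM j hjM).1, ?_⟩))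
    rw [(hσM j hjM).2]
    exact (mem_filter.mp hj).2
  have hXA : ∀ i ∈ A0, i ∉ XSet G γ A := by
    intro i hi
    refine notMemX G (hA0ssub hi) (k := 1) ?_ (by omega)
    exact card_pos.mpr ⟨σ i, mem_sdiff.mpr ⟨hσmem i (hA0M hi), hσA i hi⟩⟩
  have hXB : ∀ j ∈ M1, j ∉ XSet G γ B := by
    intro j hj
    refine notMemX G (hM1B hj) (k := 1) ?_ (by omega)
    exact card_pos.mpr ⟨σ j, mem_sdiff.mpr ⟨hσmem j (hM1M hj), hσB j hj⟩⟩
  have hXAcard : (XSet G γ A).card ≤ γ - A0.card := by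
    have hsub : XSet G γ A ⊆ F := by
      intro x hx
      rcases mem_union.mp ((mem_filter.mp hx).1) with h | h
      · exact absurd hx (hXA x h)
      · exact h
    exact (card_le_card hsub).trans_eq hFcard
  have hXBcard : (XSet G γ B).card ≤ γ - A0.card := by
    have hsub : XSet G γ B ⊆ B \ M1 := by
      intro x hx
      exact mem_sdiff.mpr ⟨(mem_filter.mp hx).1, fun h => hXB x h hx⟩
    have := card_le_card hsub
    rw [card_sdiff_of_subset hM1B, hBcard] at this
    omega
  have hneA : A.Nonempty := card_pos.mp (by omega)
  have hneB : B.Nonempty := card_pos.mp (by omega)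
  rcases hrob.2 A B hneA hneB disjoint_sdiff with h | h | h
  · omega
  · omega
  · omega

end Aux

/-- If `G` is a graph on an even number `n` of vertices, `γ = n/2`, and `G` is
`(γ,γ)`-robust, then `|E| ≥ 2γ(γ-1) + ⌈γ/2⌉`. -/
theorem stmt12 [Fintype V] [DecidableEq V] (G : SimpleGraph V) [DecidableRel G.Adj]
    (n γ : ℕ) (hn : Fintype.card V = n) (heven : Even n) (hγ : γ = n / 2)
    (hrob : RSRobust G γ γ) :
    2 * γ * (γ - 1) + (γ + 1) / 2 ≤ G.edgeFinset.card := by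
  have hcard : Fintype.card V = 2 * γ := by
    obtain ⟨c, hc⟩ := heven; omega
  have hA1 := nn_le_one G hcard hrob
  have hM := matched_le G hcard hrob
  -- sum of non-neighbor counts is at most γ
  have hsumNN : ∑ i : V, (NN G i).card ≤ γ := by
    calc ∑ i : V, (NN G i).card
        ≤ ∑ i : V, (if (NN G i).card = 1 then 1 else 0) := by
          refine sum_le_sum fun i _ => ?_
          have := hA1 i
          split <;> omega
      _ = (univ.filter fun i : V => (NN G i).card = 1).card := by
          rw [Finset.card_filter]
      _ ≤ γ := hM
  have htot : (∑ i : V, (NN G i).card) + (∑ i : V, (1 + G.degree i)) = 2 * γ * (2 * γ) := by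
    rw [← sum_add_distrib]
    rw [Finset.sum_congr rfl (fun i _ => by rw [card_NN G i, hcard])]
    rw [sum_const, card_univ, hcard, smul_eq_mul]
  have hdeg2 : ∑ i : V, (1 + G.degree i) = 2 * γ + 2 * G.edgeFinset.card := by
    rw [sum_add_distrib, sum_const, card_univ, hcard, smul_eq_mul, mul_one,
      G.sum_degrees_eq_twice_card_edges]
  set E := G.edgeFinset.card with hE
  have hk : 4 * (γ * γ) ≤ 3 * γ + 2 * E := by
    have h4 : 2 * γ * (2 * γ) = 4 * (γ * γ) := by ring
    omega
  rcases Nat.eq_zero_or_pos γ with h0 | hpos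
  · simp [h0]
  · have hge : 2 * γ * (γ - 1) + 2 * γ = 2 * (γ * γ) := by
      obtain ⟨g, rfl⟩ : ∃ g, γ = g + 1 := ⟨γ - 1, by omega⟩
      simp only [Nat.add_sub_cancel]
      ring
    generalize hK : γ * γ = k at hk hge
    generalize hA : 2 * γ * (γ - 1) = a at hge ⊢
    omega
end

section
/- Let G = (V,E) be a finite simple undirected graph on n vertices, where n is even, and let γ = n/2. If G is (γ,γ)-robust, then for every integer k ≥ 2 satisfying (k-1)·(2γ - ⌈γ/2⌉) < 2γ², the graph G contains a clique on k vertices. -/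
open Finset

variable {V : Type*}

/-!
A `(γ, γ)`-robust graph on `2γ` vertices is complete up to a matching of at most `γ / 2`
non-edges. Robustness applied to a set `S` of fewer than `γ` vertices, whose complement is too
large to contribute to `X`, forces every vertex of `S` to have `γ` neighbours outside `S`; taking
`S` to be `v` together with `γ - 2` vertices avoiding two non-neighbours of `v` shows that every
vertex has at most one non-neighbour. Orienting each non-edge by an injective labelling and
applying robustness to a balanced split separating the lower ends from the upper ends shows that
there are at most `γ / 2` non-edges. Deleting the upper end of every non-edge leaves a clique on
at least `2γ - ⌊γ/2⌋` vertices, and the hypothesis on `k` forces `k ≤ 2γ - ⌊γ/2⌋`.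
-/

open SimpleGraph

section Robustness

variable [Fintype V] [DecidableEq V] (G : SimpleGraph V) [DecidableRel G.Adj]

lemma card_neighborFinset_sdiff_add_card_le {S T : Finset V} {v : V} (hST : Disjoint S T)
    (hT : ∀ u ∈ T, ¬ G.Adj v u) : #(G.neighborFinset v \ S) + #T ≤ #Sᶜ := by
  rw [← card_union_of_disjoint]
  · refine card_le_card (union_subset (fun x hx => ?_) fun x hx => ?_)
    · exact mem_compl.2 (mem_sdiff.1 hx).2
    · exact mem_compl.2 (disjoint_right.1 hST hx)
  · exact disjoint_left.2 fun x hx hxT =>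
      hT x hxT ((G.mem_neighborFinset v x).1 (mem_sdiff.1 hx).1)

variable {G}

lemma XSet_eq_self_of_card_lt {r s : ℕ} (hrob : RSRobust G r s) {S : Finset V}
    (hS : S.Nonempty) (hSc : Sᶜ.Nonempty) (hr : #S < r) (hs : #S < s) : XSet G r S = S := by
  have hXc : XSet G r Sᶜ = ∅ := by
    refine filter_false_of_mem fun v _ hv => ?_
    have := card_neighborFinset_sdiff_add_card_le G (disjoint_empty_right Sᶜ)
      (v := v) (fun _ h => absurd h (notMem_empty _))
    rw [compl_compl, card_empty] at this
    omega
  have hXle : #(XSet G r S) ≤ #S := card_filter_le _ _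
  rcases hrob.2 S Sᶜ hS hSc disjoint_compl_right with h | h | h
  · exact eq_of_subset_of_card_le (filter_subset _ _) h.ge
  · rw [hXc, card_empty] at h
    exact absurd h.symm hSc.card_pos.ne'
  · rw [hXc, card_empty] at h
    omega

lemma degree_compl_le_one {γ : ℕ} (hrob : RSRobust G γ γ) (hcard : Fintype.card V = 2 * γ)
    (v : V) : Gᶜ.degree v ≤ 1 := by
  by_contra! h
  rw [← card_neighborFinset_eq_degree, one_lt_card] at h
  obtain ⟨a, ha, b, hb, hab⟩ := h
  simp only [mem_neighborFinset, compl_adj] at ha hb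
  have hvab : #({v, a, b} : Finset V) = 3 := by
    rw [card_insert_of_notMem (by simp [ha.1, hb.1]), card_pair hab]
  have hγ : 3 ≤ 2 * γ := hcard ▸ hvab ▸ card_le_univ _
  obtain ⟨F, hF, hFcard⟩ := exists_subset_card_eq (s := ({v, a, b} : Finset V)ᶜ) (n := γ - 2)
    (by rw [card_compl, hvab, hcard]; omega)
  have hvF : v ∉ F := fun h => mem_compl.1 (hF h) (by simp)
  obtain ⟨S, hvS, hS, hdisj⟩ :
      ∃ S : Finset V, v ∈ S ∧ #S = γ - 1 ∧ Disjoint S {a, b} := by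
    refine ⟨insert v F, mem_insert_self _ _, ?_, disjoint_left.2 fun x hx hxab => ?_⟩
    · rw [card_insert_of_notMem hvF, hFcard]
      omega
    rcases mem_insert.1 hx with rfl | hxF
    · simp only [mem_insert, mem_singleton] at hxab
      rcases hxab with rfl | rfl
      exacts [ha.1 rfl, hb.1 rfl]
    · exact mem_compl.1 (hF hxF) (by simp_all)
  have hX : v ∈ XSet G γ S := by
    rw [XSet_eq_self_of_card_lt hrob ⟨v, hvS⟩
      ⟨a, mem_compl.2 (disjoint_right.1 hdisj (by simp))⟩ (by omega) (by omega)]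
    exact hvS
  have hle := card_neighborFinset_sdiff_add_card_le G hdisj (v := v) (by simp [ha.2, hb.2])
  rw [card_compl, hS, card_pair hab, hcard] at hle
  have := (mem_filter.1 hX).2
  omega

lemma card_XSet_le_card_sub {r : ℕ} {S A : Finset V} (hSc : #Sᶜ ≤ r) (hA : A ⊆ S)
    (hAout : ∀ v ∈ A, ∃ u ∉ S, Gᶜ.Adj v u) : #(XSet G r S) ≤ #S - #A := by
  rw [← card_sdiff_of_subset hA]
  refine card_le_card fun v hv => mem_sdiff.2 ⟨(mem_filter.1 hv).1, fun hvA => ?_⟩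
  obtain ⟨u, hu, hvu⟩ := hAout v hvA
  have := card_neighborFinset_sdiff_add_card_le G (T := {u}) (v := v)
    (disjoint_singleton_right.2 hu) (by simpa using ((compl_adj G v u).1 hvu).2)
  have := (mem_filter.1 hv).2
  rw [card_singleton] at *
  omega

lemma card_add_card_le_of_forall_exists_compl_adj {γ : ℕ} (hrob : RSRobust G γ γ)
    (hcard : Fintype.card V = 2 * γ) {S A B : Finset V} (hS : #S = γ)
    (hA : A ⊆ S) (hB : B ⊆ Sᶜ) (hAne : A.Nonempty) (hBne : B.Nonempty)
    (hAB : ∀ v ∈ A, ∃ u ∈ B, Gᶜ.Adj v u) (hBA : ∀ v ∈ B, ∃ u ∈ A, Gᶜ.Adj v u) :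
    #A + #B ≤ γ := by
  have hSc : #Sᶜ = γ := by rw [card_compl, hcard, hS]; omega
  have hXS := card_XSet_le_card_sub (G := G) hSc.le hA fun v hv =>
    (hAB v hv).imp fun _ ⟨hu, h⟩ => ⟨mem_compl.1 (hB hu), h⟩
  have hXSc := card_XSet_le_card_sub (G := G) (S := Sᶜ) (by rw [compl_compl, hS]) hB
    fun v hv => (hBA v hv).imp fun _ ⟨hu, h⟩ => ⟨fun h => mem_compl.1 h (hA hu), h⟩
  have := card_le_card hA
  have := card_le_card hB
  have := hAne.card_pos
  have := hBne.card_pos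
  rcases hrob.2 S Sᶜ (hAne.mono hA) (hBne.mono hB) disjoint_compl_right with h | h | h <;> omega

end Robustness

section NonEdges

variable [Fintype V] [DecidableEq V] (G : SimpleGraph V) [DecidableRel G.Adj] (f : V → ℕ)

def lowerEnds : Finset V := {v | ∃ u, Gᶜ.Adj v u ∧ f v < f u}

def upperEnds : Finset V := {v | ∃ u, Gᶜ.Adj v u ∧ f u < f v}

variable {G f}

lemma isClique_compl_upperEnds (hf : f.Injective) :
    G.IsClique (((upperEnds G f)ᶜ : Finset V) : Set V) := by
  intro u hu v hv huv
  by_contra hadj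
  have hc : Gᶜ.Adj u v := (compl_adj G u v).2 ⟨huv, hadj⟩
  rcases lt_or_gt_of_ne (hf.ne huv) with h | h
  · exact mem_compl.1 (mem_coe.1 hv) (mem_filter.2 ⟨mem_univ _, u, hc.symm, h⟩)
  · exact mem_compl.1 (mem_coe.1 hu) (mem_filter.2 ⟨mem_univ _, v, hc, h⟩)

lemma exists_compl_adj_mem_upperEnds {v : V} (hv : v ∈ lowerEnds G f) :
    ∃ u ∈ upperEnds G f, Gᶜ.Adj v u := by
  obtain ⟨u, hvu, h⟩ := (mem_filter.1 hv).2
  exact ⟨u, mem_filter.2 ⟨mem_univ _, v, hvu.symm, h⟩, hvu⟩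

lemma exists_compl_adj_mem_lowerEnds {v : V} (hv : v ∈ upperEnds G f) :
    ∃ u ∈ lowerEnds G f, Gᶜ.Adj v u := by
  obtain ⟨u, hvu, h⟩ := (mem_filter.1 hv).2
  exact ⟨u, mem_filter.2 ⟨mem_univ _, v, hvu.symm, h⟩, hvu⟩

lemma card_le_card_of_forall_exists_compl_adj (hdeg : ∀ v, Gᶜ.degree v ≤ 1) {A B : Finset V}
    (hAB : ∀ v ∈ A, ∃ u ∈ B, Gᶜ.Adj v u) : #A ≤ #B := by
  refine card_le_card_of_forall_subsingleton (fun v u => Gᶜ.Adj v u) hAB fun u _ v hv w hw => ?_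
  have := hdeg u
  rw [← card_neighborFinset_eq_degree, card_le_one] at this
  exact this v (by simpa using hv.2.symm) w (by simpa using hw.2.symm)

lemma card_lowerEnds_eq_card_upperEnds (hdeg : ∀ v, Gᶜ.degree v ≤ 1) :
    #(lowerEnds G f) = #(upperEnds G f) :=
  le_antisymm
    (card_le_card_of_forall_exists_compl_adj hdeg fun _ => exists_compl_adj_mem_upperEnds)
    (card_le_card_of_forall_exists_compl_adj hdeg fun _ => exists_compl_adj_mem_lowerEnds)

lemma disjoint_lowerEnds_upperEnds (hdeg : ∀ v, Gᶜ.degree v ≤ 1) :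
    Disjoint (lowerEnds G f) (upperEnds G f) := by
  refine disjoint_left.2 fun v hl hu => ?_
  obtain ⟨a, hva, ha⟩ := (mem_filter.1 hl).2
  obtain ⟨b, hvb, hb⟩ := (mem_filter.1 hu).2
  have := hdeg v
  rw [← card_neighborFinset_eq_degree, card_le_one] at this
  have hab := this a (by simpa using hva) b (by simpa using hvb)
  subst hab
  omega

lemma two_mul_card_upperEnds_le {γ : ℕ} (hrob : RSRobust G γ γ)
    (hcard : Fintype.card V = 2 * γ) : 2 * #(upperEnds G f) ≤ γ := by
  have hdeg := degree_compl_le_one hrob hcard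
  have hLR := card_lowerEnds_eq_card_upperEnds (f := f) hdeg
  have hdisj := disjoint_lowerEnds_upperEnds (f := f) hdeg
  rcases (upperEnds G f).eq_empty_or_nonempty with hR | hR
  · simp [hR]
  have hL : (lowerEnds G f).Nonempty := card_pos.1 (hLR ▸ hR.card_pos)
  have hsum : #(lowerEnds G f) + #(upperEnds G f) ≤ 2 * γ :=
    hcard ▸ card_union_of_disjoint hdisj ▸ card_le_univ _
  obtain ⟨S, hLS, hSR, hS⟩ := exists_subsuperset_card_eq (n := γ)
    (subset_compl_iff_disjoint_right.2 hdisj) (by omega) (by rw [card_compl, hcard]; omega)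
  have := card_add_card_le_of_forall_exists_compl_adj hrob hcard hS hLS
    (subset_compl_comm.1 hSR) hL hR (fun _ => exists_compl_adj_mem_upperEnds)
    (fun _ => exists_compl_adj_mem_lowerEnds)
  omega

end NonEdges

lemma le_two_mul_sub_half_of_pred_mul_lt {γ k : ℕ}
    (h : (k - 1) * (2 * γ - (γ + 1) / 2) < 2 * γ ^ 2) : k ≤ 2 * γ - γ / 2 := by
  by_contra! hk
  have hk' : 2 * γ - γ / 2 ≤ k - 1 := by omega
  have := Nat.mul_le_mul_right (2 * γ - (γ + 1) / 2) hk'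
  rcases Nat.even_or_odd' γ with ⟨a, rfl | rfl⟩
  · have h1 : 2 * (2 * a) - 2 * a / 2 = 3 * a := by omega
    have h2 : 2 * (2 * a) - (2 * a + 1) / 2 = 3 * a := by omega
    rw [h1, h2] at this
    nlinarith
  · have h1 : 2 * (2 * a + 1) - (2 * a + 1) / 2 = 3 * a + 2 := by omega
    have h2 : 2 * (2 * a + 1) - (2 * a + 1 + 1) / 2 = 3 * a + 1 := by omega
    rw [h1, h2] at this
    nlinarith

/-- If `G` is a graph on an even number `n` of vertices, `γ = n/2`, and `G` is
`(γ,γ)`-robust, then for every integer `k ≥ 2` with `(k-1)·(2γ - ⌈γ/2⌉) < 2γ²`, the graph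
`G` contains a clique on `k` vertices. -/
theorem stmt13 [Fintype V] [DecidableEq V] (G : SimpleGraph V) [DecidableRel G.Adj]
    (n γ : ℕ) (hn : Fintype.card V = n) (heven : Even n) (hγ : γ = n / 2)
    (hrob : RSRobust G γ γ) :
    ∀ k : ℕ, 2 ≤ k → (k - 1) * (2 * γ - (γ + 1) / 2) < 2 * γ ^ 2 →
      ∃ t : Finset V, G.IsNClique k t := by
  intro k _ hk
  have hcard : Fintype.card V = 2 * γ := by
    obtain ⟨r, hr⟩ := heven
    omega
  obtain ⟨f, hf⟩ : ∃ f : V → ℕ, f.Injective :=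
    ⟨_, Fin.val_injective.comp (Fintype.equivFin V).injective⟩
  have hR := two_mul_card_upperEnds_le (f := f) hrob hcard
  obtain ⟨t, ht, htk⟩ := exists_subset_card_eq (s := (upperEnds G f)ᶜ) (n := k) (by
    rw [card_compl, hcard]
    have := le_two_mul_sub_half_of_pred_mul_lt hk
    omega)
  exact ⟨t, (isClique_compl_upperEnds hf).subset (coe_subset.2 ht), htk⟩
end

section
/- Let G = (V,E) be a finite simple undirected graph on n vertices, where n > 1 is odd, and let γ = ⌈n/2⌉. Then G is (γ,γ)-robust if and only if G is the complete graph on n vertices. -/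
open Finset

variable {V : Type*}

/-- For odd `n > 1` and `γ = ⌈n/2⌉`: a graph on `n` vertices is `(γ,γ)`-robust iff it is
the complete graph. -/
theorem stmt17 [Fintype V] [DecidableEq V] (G : SimpleGraph V) [DecidableRel G.Adj]
    (n γ : ℕ) (hn : Fintype.card V = n) (hn1 : 1 < n) (hodd : Odd n)
    (hγ : γ = (n + 1) / 2) :
    RSRobust G γ γ ↔ G = ⊤ := by
  obtain ⟨m, hm⟩ := hodd
  have hm1 : 1 ≤ m := by omega
  have hγv : γ = m + 1 := by omega
  constructor
  · rintro ⟨hr1, hrob⟩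
    by_contra hne
    have hex : ∃ u v, ¬ G.Adj u v ∧ u ≠ v := by
      by_contra h'
      push_neg at h'
      apply hne
      ext a b
      simp only [SimpleGraph.top_adj]
      refine ⟨G.ne_of_adj, fun hab => ?_⟩
      by_contra hadj
      exact hab (h' a b hadj)
    obtain ⟨u, v, huv, hune⟩ := hex
    have hsub : {u} ⊆ Finset.univ.erase v := by
      simp [Finset.singleton_subset_iff, Finset.mem_erase, hune]
    have hcard_t : (Finset.univ.erase v).card = n - 1 := by
      rw [Finset.card_erase_of_mem (Finset.mem_univ v), Finset.card_univ, hn]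
    obtain ⟨S1, hS1u, hS1t, hS1card⟩ :=
      Finset.exists_subsuperset_card_eq hsub (by simp; omega) (by omega : γ ≤ _)
    have huS1 : u ∈ S1 := hS1u (Finset.mem_singleton_self u)
    have hvS1 : v ∉ S1 := fun h => by
      have := hS1t h
      rw [Finset.mem_erase] at this
      exact this.1 rfl
    have hS2card : S1ᶜ.card = m := by
      rw [Finset.card_compl, hn, hS1card]; omega
    have hX1 : XSet G γ S1 = ∅ := by
      rw [Finset.eq_empty_iff_forall_notMem]
      intro i hi
      rw [XSet, Finset.mem_filter] at hi
      obtain ⟨hiS, hle⟩ := hi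
      have hsub' : G.neighborFinset i \ S1 ⊆ S1ᶜ := by
        intro x hx
        rw [Finset.mem_compl]
        exact (Finset.mem_sdiff.mp hx).2
      have := Finset.card_le_card hsub'
      rw [hS2card] at this
      omega
    have hvX2 : v ∉ XSet G γ S1ᶜ := by
      rw [XSet, Finset.mem_filter]
      rintro ⟨-, hle⟩
      have hsub' : G.neighborFinset v \ S1ᶜ ⊆ S1.erase u := by
        intro x hx
        rw [Finset.mem_sdiff, Finset.mem_compl, not_not] at hx
        rw [Finset.mem_erase]
        refine ⟨?_, hx.2⟩
        rintro rfl
        exact huv (G.adj_symm (by simpa using hx.1))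
      have := Finset.card_le_card hsub'
      rw [Finset.card_erase_of_mem huS1, hS1card] at this
      omega
    have hX2sub : XSet G γ S1ᶜ ⊆ S1ᶜ.erase v := by
      intro x hx
      rw [Finset.mem_erase]
      refine ⟨fun h => hvX2 (h ▸ hx), (Finset.mem_filter.mp hx).1⟩
    have hX2card : (XSet G γ S1ᶜ).card ≤ m - 1 := by
      have := Finset.card_le_card hX2sub
      rwa [Finset.card_erase_of_mem (by rw [Finset.mem_compl]; exact hvS1), hS2card] at this
    rcases hrob S1 S1ᶜ ⟨u, huS1⟩ ⟨v, by rw [Finset.mem_compl]; exact hvS1⟩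
        disjoint_compl_right with h | h | h
    · rw [hX1, Finset.card_empty, hS1card] at h; omega
    · rw [hS2card] at h; omega
    · rw [hX1, Finset.card_empty] at h; omega
  · intro hG
    subst hG
    refine ⟨by omega, ?_⟩
    intro S1 S2 h1 h2 hdis
    have key : ∀ S : Finset V, ∀ i ∈ S, ((⊤ : SimpleGraph V).neighborFinset i \ S).card
        = n - S.card := by
      intro S i hiS
      have hEq : (⊤ : SimpleGraph V).neighborFinset i \ S = Sᶜ := by
        ext x
        rw [Finset.mem_sdiff, Finset.mem_compl, SimpleGraph.mem_neighborFinset,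
          SimpleGraph.top_adj]
        constructor
        · exact fun h => h.2
        · intro hx
          exact ⟨fun h => hx (h ▸ hiS), hx⟩
      rw [hEq, Finset.card_compl, hn]
    have hfull : ∀ S : Finset V, S.card ≤ m → (XSet (⊤ : SimpleGraph V) γ S).card = S.card := by
      intro S hS
      have : XSet (⊤ : SimpleGraph V) γ S = S := by
        rw [XSet, Finset.filter_true_of_mem]
        intro i hi
        rw [key S i hi]
        omega
      rw [this]
    have hsum : S1.card + S2.card ≤ n := by
      rw [← Finset.card_union_of_disjoint hdis, ← hn, ← Finset.card_univ]
      exact Finset.card_le_card (Finset.subset_univ _)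
    by_cases hc : S1.card ≤ m
    · exact Or.inl (hfull S1 hc)
    · exact Or.inr (Or.inl (hfull S2 (by omega)))
end
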